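/- arXiv:1401.3823 — 6 statements merged into one kernel-verified Lean document; each statement's English description precedes it below -/
import Mathlib

section
/- Let m ≥ 1, let T ⊆ ℕ^{<ℕ} be a finite tree with trunk σ such that every node of T extending σ that is not a leaf has at least 2m immediate successors in T, and let P₀ and P₁ be finite trees with T ⊆ P₀ ∪ P₁. Then there exists a subtree S ⊆ T with trunk σ, all of whose non-leaf nodes extending σ have at least m immediate successors in S, such that every leaf of S is a leaf of T, and either S ⊆ P₀ or S ⊆ P₁. -/
open scoped Classical

/-- A (finite) tree: a set of finite sequences closed under initial segments. -/
def IsTree (T : Finset (List ℕ)) : Prop :=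
  ∀ σ ∈ T, ∀ τ : List ℕ, τ <+: σ → τ ∈ T

/-- A leaf of `T`: an element with no proper extension in `T`. -/
def IsLeaf (T : Finset (List ℕ)) (σ : List ℕ) : Prop :=
  σ ∈ T ∧ ∀ τ ∈ T, σ <+: τ → τ = σ

/-- `σ` is a trunk of `T`: `σ ∈ T` and every element of `T` is comparable with `σ`. -/
def HasTrunk (T : Finset (List ℕ)) (σ : List ℕ) : Prop :=
  σ ∈ T ∧ ∀ τ ∈ T, σ <+: τ ∨ τ <+: σ

/-- The immediate successors of `τ` in `T`. -/
noncomputable def succs (T : Finset (List ℕ)) (τ : List ℕ) : Finset (List ℕ) :=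
  T.filter fun ρ => τ <+: ρ ∧ ρ.length = τ.length + 1

/-- `T` (with trunk `σ`) is ≥`n`-branching: every non-leaf node of `T` extending `σ`
has at least `n` immediate successors in `T`. -/
def Branching (n : ℕ) (T : Finset (List ℕ)) (σ : List ℕ) : Prop :=
  ∀ τ ∈ T, σ <+: τ → ¬ IsLeaf T τ → n ≤ (succs T τ).card

lemma succs_mono {S S' : Finset (List ℕ)} (h : S ⊆ S') (τ : List ℕ) :
    succs S τ ⊆ succs S' τ := by
  intro x hx
  simp only [succs, Finset.mem_filter] at hx ⊢
  exact ⟨h hx.1, hx.2⟩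

lemma isLeaf_mono {S S' : Finset (List ℕ)} (h : S ⊆ S') {x : List ℕ}
    (hx : x ∈ S) (hl : IsLeaf S' x) : IsLeaf S x :=
  ⟨hx, fun τ hτ hpre => hl.2 τ (h hτ) hpre⟩

lemma prefix_antisymm' {a b : List ℕ} (h1 : a <+: b) (h2 : b <+: a) : a = b :=
  h1.eq_of_length (le_antisymm h1.length_le h2.length_le)

/-- Base case: a leaf gives the singleton subtree. -/
lemma leaf_case (m : ℕ) (T P₀ P₁ : Finset (List ℕ)) (τ : List ℕ)
    (hτ : τ ∈ T) (hsub : T ⊆ P₀ ∪ P₁) (hleaf : IsLeaf T τ) :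
    ∃ S : Finset (List ℕ), S ⊆ T ∧ τ ∈ S ∧ (∀ x ∈ S, τ <+: x) ∧
      (∀ x ∈ S, ∀ π : List ℕ, τ <+: π → π <+: x → π ∈ S) ∧
      Branching m S τ ∧ (∀ x, IsLeaf S x → IsLeaf T x) ∧ (S ⊆ P₀ ∨ S ⊆ P₁) := by
  refine ⟨{τ}, ?_, ?_, ?_, ?_, ?_, ?_, ?_⟩
  · simpa using hτ
  · simp
  · intro x hx
    simp only [Finset.mem_singleton] at hx
    subst hx; exact List.prefix_rfl
  · intro x hx π h1 h2
    simp only [Finset.mem_singleton] at hx ⊢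
    subst hx
    exact prefix_antisymm' h2 h1
  · intro ν hν hσν hnl
    exfalso; apply hnl
    simp only [Finset.mem_singleton] at hν
    subst hν
    exact ⟨Finset.mem_singleton_self _, fun ρ hρ _ => by simpa using hρ⟩
  · intro x hx
    have hxτ : x = τ := by simpa using hx.1
    subst hxτ; exact hleaf
  · rcases Finset.mem_union.mp (hsub hτ) with h | h
    · left; simpa using h
    · right; simpa using h

/-- The key inductive construction: from any node `τ` of `T` extending `σ`, we can grow
an `m`-branching subtree rooted at `τ` whose leaves are leaves of `T`, lying entirely
in `P₀` or in `P₁`. -/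
lemma key (m : ℕ) (hm : 1 ≤ m) (T P₀ P₁ : Finset (List ℕ)) (σ : List ℕ)
    (hT : IsTree T) (hP₀ : IsTree P₀) (hP₁ : IsTree P₁)
    (hbr : Branching (2 * m) T σ) (hsub : T ⊆ P₀ ∪ P₁) :
    ∀ k : ℕ, ∀ τ : List ℕ, τ ∈ T → σ <+: τ →
      (∀ ρ ∈ T, τ <+: ρ → ρ.length ≤ τ.length + k) →
      ∃ S : Finset (List ℕ), S ⊆ T ∧ τ ∈ S ∧ (∀ x ∈ S, τ <+: x) ∧
        (∀ x ∈ S, ∀ π : List ℕ, τ <+: π → π <+: x → π ∈ S) ∧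
        Branching m S τ ∧ (∀ x, IsLeaf S x → IsLeaf T x) ∧ (S ⊆ P₀ ∨ S ⊆ P₁) := by
  intro k
  induction k with
  | zero =>
    intro τ hτ hστ hbd
    have hleaf : IsLeaf T τ := by
      refine ⟨hτ, fun ρ hρ hpre => ?_⟩
      exact (hpre.eq_of_length (le_antisymm hpre.length_le (by simpa using hbd ρ hρ hpre))).symm
    exact leaf_case m T P₀ P₁ τ hτ hsub hleaf
  | succ k ih =>
    intro τ hτ hστ hbd
    by_cases hleaf : IsLeaf T τ
    · exact leaf_case m T P₀ P₁ τ hτ hsub hleaf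
    have hcard : 2 * m ≤ (succs T τ).card := hbr τ hτ hστ hleaf
    have hmemsucc : ∀ ρ ∈ succs T τ, ρ ∈ T ∧ τ <+: ρ ∧ ρ.length = τ.length + 1 := by
      intro ρ hρ
      simpa [succs, Finset.mem_filter] using hρ
    have hex : ∀ ρ : List ℕ, ∃ S : Finset (List ℕ),
        ρ ∈ succs T τ → (S ⊆ T ∧ ρ ∈ S ∧ (∀ x ∈ S, ρ <+: x) ∧
          (∀ x ∈ S, ∀ π : List ℕ, ρ <+: π → π <+: x → π ∈ S) ∧
          Branching m S ρ ∧ (∀ x, IsLeaf S x → IsLeaf T x) ∧ (S ⊆ P₀ ∨ S ⊆ P₁)) := by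
      intro ρ
      by_cases hρ : ρ ∈ succs T τ
      · obtain ⟨hρT, hpre, hlen⟩ := hmemsucc ρ hρ
        obtain ⟨S, hS⟩ := ih ρ hρT (hστ.trans hpre) (fun x hx hpx => by
          have := hbd x hx (hpre.trans hpx); omega)
        exact ⟨S, fun _ => hS⟩
      · exact ⟨∅, fun h => absurd h hρ⟩
    choose F hF using hex
    have hsplit : ((succs T τ).filter (fun ρ => F ρ ⊆ P₀)).card +
        ((succs T τ).filter (fun ρ => ¬ F ρ ⊆ P₀)).card = (succs T τ).card :=
      Finset.card_filter_add_card_filter_not _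
    obtain ⟨A, hAsub, hAcard, P, hPtree, hPor, hAP⟩ :
        ∃ A ⊆ succs T τ, m ≤ A.card ∧ ∃ P : Finset (List ℕ), IsTree P ∧
          (P = P₀ ∨ P = P₁) ∧ ∀ ρ ∈ A, F ρ ⊆ P := by
      have hor : m ≤ ((succs T τ).filter (fun ρ => F ρ ⊆ P₀)).card ∨
          m ≤ ((succs T τ).filter (fun ρ => ¬ F ρ ⊆ P₀)).card := by omega
      rcases hor with h | h
      · exact ⟨_, Finset.filter_subset _ _, h, P₀, hP₀, Or.inl rfl,
          fun ρ hρ => (Finset.mem_filter.mp hρ).2⟩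
      · refine ⟨_, Finset.filter_subset _ _, h, P₁, hP₁, Or.inr rfl, fun ρ hρ => ?_⟩
        obtain ⟨hρs, hnp⟩ := Finset.mem_filter.mp hρ
        rcases (hF ρ hρs).2.2.2.2.2.2 with h' | h'
        · exact absurd h' hnp
        · exact h'
    have hFp := fun ρ (hρ : ρ ∈ A) => hF ρ (hAsub hρ)
    have hAs := fun ρ (hρ : ρ ∈ A) => hmemsucc ρ (hAsub hρ)
    set S : Finset (List ℕ) := insert τ (A.biUnion F) with hSdef
    have hmemS : ∀ x, x ∈ S ↔ x = τ ∨ ∃ ρ ∈ A, x ∈ F ρ := by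
      intro x; simp [hSdef, Finset.mem_insert, Finset.mem_biUnion]
    have hFsubS : ∀ ρ ∈ A, F ρ ⊆ S := by
      intro ρ hρ x hx
      exact (hmemS x).mpr (Or.inr ⟨ρ, hρ, hx⟩)
    have hAne : ∃ ρ, ρ ∈ A := Finset.card_pos.mp (lt_of_lt_of_le hm hAcard) |>.imp
      (fun ρ h => h)
    -- x ∈ S with x ≠ τ lies in a unique F ρ containing every extension in S
    have hup : ∀ ρ ∈ A, ∀ ν ∈ F ρ, ∀ x ∈ S, ν <+: x → x ∈ F ρ := by
      intro ρ hρ ν hν x hx hνx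
      have hρν : ρ <+: ν := (hFp ρ hρ).2.2.1 ν hν
      rcases (hmemS x).mp hx with rfl | ⟨ρ', hρ', hx'⟩
      · exfalso
        have h1 := hρν.length_le
        have h2 := hνx.length_le
        have h3 := (hAs ρ hρ).2.2
        omega
      · have hρ'x : ρ' <+: x := (hFp ρ' hρ').2.2.1 x hx'
        have hρx : ρ <+: x := hρν.trans hνx
        have : ρ = ρ' := by
          rcases List.prefix_or_prefix_of_prefix hρx hρ'x with h | h
          · exact h.eq_of_length (by rw [(hAs ρ hρ).2.2, (hAs ρ' hρ').2.2])
          · exact (h.eq_of_length (by rw [(hAs ρ hρ).2.2, (hAs ρ' hρ').2.2])).symm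
        subst this
        exact hx'
    refine ⟨S, ?_, ?_, ?_, ?_, ?_, ?_, ?_⟩
    · -- S ⊆ T
      intro x hx
      rcases (hmemS x).mp hx with rfl | ⟨ρ, hρ, hx'⟩
      · exact hτ
      · exact (hFp ρ hρ).1 hx'
    · exact Finset.mem_insert_self _ _
    · -- everything extends τ
      intro x hx
      rcases (hmemS x).mp hx with rfl | ⟨ρ, hρ, hx'⟩
      · exact List.prefix_rfl
      · exact (hAs ρ hρ).2.1.trans ((hFp ρ hρ).2.2.1 x hx')
    · -- closure under prefixes extending τ
      intro x hx π hτπ hπx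
      rcases (hmemS x).mp hx with rfl | ⟨ρ, hρ, hx'⟩
      · have : π = x := prefix_antisymm' hπx hτπ
        subst this; exact Finset.mem_insert_self _ _
      · have hρx : ρ <+: x := (hFp ρ hρ).2.2.1 x hx'
        rcases List.prefix_or_prefix_of_prefix hπx hρx with h | h
        · -- π <+: ρ : then π = τ or π = ρ
          have h1 := hτπ.length_le
          have h2 := h.length_le
          have h3 := (hAs ρ hρ).2.2
          by_cases hl : π.length = τ.length
          · have : τ = π := hτπ.eq_of_length hl.symm
            subst this; exact Finset.mem_insert_self _ _
          · have : π = ρ := h.eq_of_length (by omega)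
            exact this ▸ hFsubS ρ hρ (hFp ρ hρ).2.1
        · exact hFsubS ρ hρ ((hFp ρ hρ).2.2.2.1 x hx' π h hπx)
    · -- Branching m S τ
      intro ν hν _ hnl
      rcases (hmemS ν).mp hν with rfl | ⟨ρ, hρ, hν'⟩
      · -- ν = τ : A ⊆ succs S ν
        have hAsuccs : A ⊆ succs S ν := by
          intro ρ hρ
          simp only [succs, Finset.mem_filter]
          exact ⟨hFsubS ρ hρ (hFp ρ hρ).2.1, (hAs ρ hρ).2.1, (hAs ρ hρ).2.2⟩
        exact le_trans hAcard (Finset.card_le_card hAsuccs)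
      · -- ν in some F ρ
        have hρν : ρ <+: ν := (hFp ρ hρ).2.2.1 ν hν'
        have hnl' : ¬ IsLeaf (F ρ) ν := by
          intro hlf
          apply hnl
          exact ⟨hν, fun x hx hpre => hlf.2 x (hup ρ hρ ν hν' x hx hpre) hpre⟩
        have := (hFp ρ hρ).2.2.2.2.1 ν hν' hρν hnl'
        exact le_trans this (Finset.card_le_card (succs_mono (hFsubS ρ hρ) ν))
    · -- leaves of S are leaves of T
      intro x hlx
      rcases (hmemS x).mp hlx.1 with rfl | ⟨ρ, hρ, hx'⟩
      · exfalso
        obtain ⟨ρ, hρ⟩ := hAne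
        have hρS : ρ ∈ S := hFsubS ρ hρ (hFp ρ hρ).2.1
        have := hlx.2 ρ hρS (hAs ρ hρ).2.1
        have h3 := (hAs ρ hρ).2.2
        rw [this] at h3; omega
      · exact (hFp ρ hρ).2.2.2.2.2.1 x (isLeaf_mono (hFsubS ρ hρ) hx' hlx)
    · -- S ⊆ P₀ or S ⊆ P₁
      have hSP : S ⊆ P := by
        intro x hx
        rcases (hmemS x).mp hx with rfl | ⟨ρ, hρ, hx'⟩
        · obtain ⟨ρ, hρ⟩ := hAne
          exact hPtree _ (hAP ρ hρ (hFp ρ hρ).2.1) x (hAs ρ hρ).2.1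
        · exact hAP ρ hρ hx'
      rcases hPor with rfl | rfl
      · exact Or.inl hSP
      · exact Or.inr hSP

theorem stmt_0 (m : ℕ) (hm : 1 ≤ m) (T P₀ P₁ : Finset (List ℕ)) (σ : List ℕ)
    (hT : IsTree T) (hP₀ : IsTree P₀) (hP₁ : IsTree P₁)
    (htr : HasTrunk T σ) (hbr : Branching (2 * m) T σ)
    (hsub : T ⊆ P₀ ∪ P₁) :
    ∃ S : Finset (List ℕ), IsTree S ∧ S ⊆ T ∧ HasTrunk S σ ∧ Branching m S σ ∧
      (∀ τ : List ℕ, IsLeaf S τ → IsLeaf T τ) ∧ (S ⊆ P₀ ∨ S ⊆ P₁) := by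
  obtain ⟨hσT, htrunk⟩ := htr
  obtain ⟨S₀, hS₀T, hσS₀, hext, hclos, hbr₀, hleaf₀, hPor⟩ :=
    key m hm T P₀ P₁ σ hT hP₀ hP₁ hbr hsub (T.sup List.length) σ hσT List.prefix_rfl
      (fun ρ hρ _ => le_trans (Finset.le_sup hρ) (Nat.le_add_left _ _))
  refine ⟨σ.inits.toFinset ∪ S₀, ?_, ?_, ?_, ?_, ?_, ?_⟩
  · -- IsTree
    intro x hx π hπ
    rcases Finset.mem_union.mp hx with h | h
    · have hxσ : x <+: σ := by simpa [List.mem_inits] using h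
      exact Finset.mem_union_left _ (by simp [List.mem_inits]; exact hπ.trans hxσ)
    · have hσx : σ <+: x := hext x h
      rcases List.prefix_or_prefix_of_prefix hπ hσx with h' | h'
      · exact Finset.mem_union_left _ (by simpa [List.mem_inits] using h')
      · exact Finset.mem_union_right _ (hclos x h π h' hπ)
  · -- ⊆ T
    intro x hx
    rcases Finset.mem_union.mp hx with h | h
    · exact hT σ hσT x (by simpa [List.mem_inits] using h)
    · exact hS₀T h
  · -- HasTrunk
    refine ⟨Finset.mem_union_right _ hσS₀, fun τ hτ => ?_⟩
    rcases Finset.mem_union.mp hτ with h | h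
    · exact Or.inr (by simpa [List.mem_inits] using h)
    · exact Or.inl (hext τ h)
  · -- Branching
    intro ν hν hσν hnl
    have hνS₀ : ν ∈ S₀ := by
      rcases Finset.mem_union.mp hν with h | h
      · have : ν = σ := prefix_antisymm' (by simpa [List.mem_inits] using h) hσν
        subst this; exact hσS₀
      · exact h
    have hnl' : ¬ IsLeaf S₀ ν := by
      intro hlf
      apply hnl
      refine ⟨hν, fun x hx hpre => ?_⟩
      rcases Finset.mem_union.mp hx with h | h
      · have hxσ : x <+: σ := by simpa [List.mem_inits] using h
        have h1 := hσν.length_le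
        have h2 := hpre.length_le
        have h3 := hxσ.length_le
        exact (hpre.eq_of_length (by omega)).symm
      · exact hlf.2 x h hpre
    exact le_trans (hbr₀ ν hνS₀ (hext ν hνS₀) hnl')
      (Finset.card_le_card (succs_mono Finset.subset_union_right ν))
  · -- leaves
    intro τ hlτ
    have hτS₀ : τ ∈ S₀ := by
      rcases Finset.mem_union.mp hlτ.1 with h | h
      · have hτσ : τ <+: σ := by simpa [List.mem_inits] using h
        have := hlτ.2 σ (Finset.mem_union_right _ hσS₀) hτσ
        rw [← this]; exact hσS₀
      · exact h
    exact hleaf₀ τ (isLeaf_mono Finset.subset_union_right hτS₀ hlτ)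
  · -- ⊆ P₀ or P₁
    have key' : ∀ P : Finset (List ℕ), IsTree P → S₀ ⊆ P → σ.inits.toFinset ∪ S₀ ⊆ P := by
      intro P hP hSP x hx
      rcases Finset.mem_union.mp hx with h | h
      · exact hP σ (hSP hσS₀) x (by simpa [List.mem_inits] using h)
      · exact hSP h
    rcases hPor with h | h
    · exact Or.inl (key' P₀ hP₀ h)
    · exact Or.inr (key' P₁ hP₁ h)
end

section
/- Let m, n ≥ 1, let T be a finite ≥(m·2^{n-1})-branching tree with trunk σ, and let (P_i : i < n) be finite trees such that T ⊆ ⋃_{i<n} P_i. Then there exist i < n and a ≥m-branching subtree S ⊆ T with trunk σ such that every leaf of S is a leaf of T and S ⊆ P_i. -/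
open scoped Classical

/-! ### Auxiliary machinery -/

/-- The finset of prefixes of `τ`. -/
noncomputable def prefFinset (τ : List ℕ) : Finset (List ℕ) :=
  (Finset.range (τ.length + 1)).image (fun k => τ.take k)

lemma mem_prefFinset {ν τ : List ℕ} : ν ∈ prefFinset τ ↔ ν <+: τ := by
  simp only [prefFinset, Finset.mem_image, Finset.mem_range]
  constructor
  · rintro ⟨k, _, rfl⟩; exact List.take_prefix k τ
  · intro h
    exact ⟨ν.length, by have := h.length_le; omega, (List.prefix_iff_eq_take.mp h).symm⟩

lemma prefix_comm {x y z : List ℕ} (h1 : x <+: z) (h2 : y <+: z) : x <+: y ∨ y <+: x := by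
  rcases le_total x.length y.length with h | h
  · exact Or.inl (List.prefix_of_prefix_length_le h1 h2 h)
  · exact Or.inr (List.prefix_of_prefix_length_le h2 h1 h)

lemma mem_succs {T : Finset (List ℕ)} {τ ρ : List ℕ} :
    ρ ∈ succs T τ ↔ ρ ∈ T ∧ τ <+: ρ ∧ ρ.length = τ.length + 1 := by
  simp [succs]

/-- `S` is a good witness inside `P` above trunk `τ`. -/
def Good (a : ℕ) (T P S : Finset (List ℕ)) (τ : List ℕ) : Prop :=
  IsTree S ∧ S ⊆ T ∧ HasTrunk S τ ∧ Branching a S τ ∧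
    (∀ ν : List ℕ, IsLeaf S ν → IsLeaf T ν) ∧ S ⊆ P

lemma good_single {a : ℕ} {T P : Finset (List ℕ)} (hT : IsTree T) (hP : IsTree P)
    {τ : List ℕ} (hτT : τ ∈ T) (hτP : τ ∈ P) (hleaf : IsLeaf T τ) :
    Good a T P (prefFinset τ) τ := by
  have hleafS : IsLeaf (prefFinset τ) τ := by
    refine ⟨mem_prefFinset.mpr List.prefix_rfl, ?_⟩
    intro μ hμ hτμ
    exact (hτμ.eq_of_length (le_antisymm hτμ.length_le (mem_prefFinset.mp hμ).length_le)).symm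
  refine ⟨?_, ?_, ⟨mem_prefFinset.mpr List.prefix_rfl, ?_⟩, ?_, ?_, ?_⟩
  · intro ν hν μ hμ
    exact mem_prefFinset.mpr (hμ.trans (mem_prefFinset.mp hν))
  · intro ν hν; exact hT τ hτT ν (mem_prefFinset.mp hν)
  · intro ν hν; exact Or.inr (mem_prefFinset.mp hν)
  · intro ν hν hτν hnl
    exfalso
    have hντ := mem_prefFinset.mp hν
    have : ν = τ := hντ.eq_of_length (le_antisymm hντ.length_le hτν.length_le)
    exact hnl (this ▸ hleafS)
  · rintro ν ⟨hν, hl⟩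
    have : τ = ν := hl τ (mem_prefFinset.mpr List.prefix_rfl) (mem_prefFinset.mp hν)
    exact this ▸ hleaf
  · intro ν hν; exact hP τ hτP ν (mem_prefFinset.mp hν)

lemma good_combine {a : ℕ} (ha : 1 ≤ a) {T P : Finset (List ℕ)} (hT : IsTree T) (hP : IsTree P)
    {τ : List ℕ} (hτT : τ ∈ T) {F : Finset (List ℕ)} (hF : F ⊆ succs T τ)
    (hcard : a ≤ F.card) {Sf : List ℕ → Finset (List ℕ)}
    (hSf : ∀ ρ ∈ F, Good a T P (Sf ρ) ρ) :
    Good a T P (prefFinset τ ∪ F.biUnion Sf) τ := by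
  set S := prefFinset τ ∪ F.biUnion Sf with hS
  have hmem : ∀ ν, ν ∈ S ↔ ν <+: τ ∨ ∃ ρ ∈ F, ν ∈ Sf ρ := by
    intro ν
    simp [hS, mem_prefFinset]
  have hρfacts : ∀ ρ ∈ F, ρ ∈ T ∧ τ <+: ρ ∧ ρ.length = τ.length + 1 :=
    fun ρ hρ => mem_succs.mp (hF hρ)
  have hsplit : ∀ ρ ∈ F, ∀ ν ∈ Sf ρ, ν <+: τ ∨ ρ <+: ν := by
    intro ρ hρ ν hν
    obtain ⟨hρT, hτρ, hlen⟩ := hρfacts ρ hρ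
    obtain ⟨_, _, ⟨hρSf, htrρ⟩, _, _, _⟩ := hSf ρ hρ
    rcases htrρ ν hν with h | h
    · exact Or.inr h
    · by_cases hl : ν.length ≤ τ.length
      · exact Or.inl (List.prefix_of_prefix_length_le h hτρ hl)
      · have : ν = ρ := h.eq_of_length (by have := h.length_le; omega)
        exact Or.inr (this ▸ List.prefix_rfl)
  have huniq : ∀ ν ∈ S, ∀ ρ ∈ F, ρ <+: ν → ν ∈ Sf ρ := by
    intro ν hν ρ hρ hρν
    obtain ⟨hρT, hτρ, hlen⟩ := hρfacts ρ hρ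
    rcases (hmem ν).mp hν with h | ⟨ρ', hρ', hν'⟩
    · exfalso; have := (hρν.trans h).length_le; omega
    · rcases hsplit ρ' hρ' ν hν' with h | h
      · exfalso
        have := (hρν.trans h).length_le
        omega
      · obtain ⟨hρ'T, hτρ', hlen'⟩ := hρfacts ρ' hρ'
        have : ρ' = ρ := by
          rcases prefix_comm h hρν with h2 | h2
          · exact h2.eq_of_length (by omega)
          · exact (h2.eq_of_length (by omega)).symm
        exact this ▸ hν'
  have hF_ne : ∃ ρ0, ρ0 ∈ F := by
    have : 0 < F.card := lt_of_lt_of_le ha hcard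
    exact Finset.card_pos.mp this
  obtain ⟨ρ0, hρ0⟩ := hF_ne
  have hρ0S : ρ0 ∈ S := (hmem ρ0).mpr (Or.inr ⟨ρ0, hρ0, ((hSf ρ0 hρ0).2.2.1).1⟩)
  have hτρ0 := (hρfacts ρ0 hρ0).2.1
  have hlenρ0 := (hρfacts ρ0 hρ0).2.2
  refine ⟨?_, ?_, ⟨(hmem τ).mpr (Or.inl List.prefix_rfl), ?_⟩, ?_, ?_, ?_⟩
  · -- IsTree S
    intro ν hν μ hμ
    rcases (hmem ν).mp hν with h | ⟨ρ, hρ, hν'⟩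
    · exact (hmem μ).mpr (Or.inl (hμ.trans h))
    · exact (hmem μ).mpr (Or.inr ⟨ρ, hρ, ((hSf ρ hρ).1) ν hν' μ hμ⟩)
  · -- S ⊆ T
    intro ν hν
    rcases (hmem ν).mp hν with h | ⟨ρ, hρ, hν'⟩
    · exact hT τ hτT ν h
    · exact (hSf ρ hρ).2.1 hν'
  · -- trunk comparability
    intro ν hν
    rcases (hmem ν).mp hν with h | ⟨ρ, hρ, hν'⟩
    · exact Or.inr h
    · rcases hsplit ρ hρ ν hν' with h | h
      · exact Or.inr h
      · exact Or.inl ((hρfacts ρ hρ).2.1.trans h)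
  · -- Branching
    intro ν hν hτν hnl
    by_cases hcase : ν = τ
    · subst hcase
      have hsub : F ⊆ succs S ν := by
        intro ρ hρ
        exact mem_succs.mpr ⟨(hmem ρ).mpr (Or.inr ⟨ρ, hρ, ((hSf ρ hρ).2.2.1).1⟩),
          (hρfacts ρ hρ).2.1, (hρfacts ρ hρ).2.2⟩
      exact le_trans hcard (Finset.card_le_card hsub)
    · rcases (hmem ν).mp hν with h | ⟨ρ, hρ, hνρ⟩
      · exact absurd (hτν.eq_of_length (le_antisymm hτν.length_le h.length_le)).symm hcase
      · rcases hsplit ρ hρ ν hνρ with h | hρν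
        · exact absurd (hτν.eq_of_length (le_antisymm hτν.length_le h.length_le)).symm hcase
        · obtain ⟨_, _, _, hbrρ, _, _⟩ := hSf ρ hρ
          have hnl' : ¬ IsLeaf (Sf ρ) ν := by
            intro hlf
            apply hnl
            refine ⟨hν, ?_⟩
            intro μ hμ hνμ
            exact hlf.2 μ (huniq μ hμ ρ hρ (hρν.trans hνμ)) hνμ
          have hb := hbrρ ν hνρ hρν hnl'
          have hsub : succs (Sf ρ) ν ⊆ succs S ν := by
            intro μ hμ
            have h1 := mem_succs.mp hμ
            exact mem_succs.mpr ⟨(hmem μ).mpr (Or.inr ⟨ρ, hρ, h1.1⟩), h1.2⟩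
          exact le_trans hb (Finset.card_le_card hsub)
  · -- leaves
    rintro ν ⟨hν, hl⟩
    rcases (hmem ν).mp hν with h | ⟨ρ, hρ, hνρ⟩
    · exfalso
      have heq := hl ρ0 hρ0S (h.trans hτρ0)
      have hle := h.length_le
      have h3 : ρ0.length = ν.length := by rw [heq]
      omega
    · rcases hsplit ρ hρ ν hνρ with h | hρν
      · exfalso
        have hρS : ρ ∈ S := (hmem ρ).mpr (Or.inr ⟨ρ, hρ, ((hSf ρ hρ).2.2.1).1⟩)
        have heq := hl ρ hρS (h.trans (hρfacts ρ hρ).2.1)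
        have hle := h.length_le
        have hlen := (hρfacts ρ hρ).2.2
        have h3 : ρ.length = ν.length := by rw [heq]
        omega
      · apply (hSf ρ hρ).2.2.2.2.1
        refine ⟨hνρ, ?_⟩
        intro μ hμ hνμ
        exact hl μ ((hmem μ).mpr (Or.inr ⟨ρ, hρ, hμ⟩)) hνμ
  · -- S ⊆ P
    intro ν hν
    have hτP : τ ∈ P := hP ρ0 ((hSf ρ0 hρ0).2.2.2.2.2 ((hSf ρ0 hρ0).2.2.1).1) τ hτρ0
    rcases (hmem ν).mp hν with h | ⟨ρ, hρ, hν'⟩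
    · exact hP τ hτP ν h
    · exact (hSf ρ hρ).2.2.2.2.2 hν'

lemma two_split {a b : ℕ} (ha : 1 ≤ a) (hb : 1 ≤ b) {T P Q : Finset (List ℕ)} {σ : List ℕ}
    (hT : IsTree T) (hP : IsTree P) (hQ : IsTree Q) (htr : HasTrunk T σ)
    (hbr : Branching (a + b - 1) T σ) (hcov : ∀ τ ∈ T, τ ∈ P ∨ τ ∈ Q) :
    (∃ S, Good a T P S σ) ∨ (∃ S, Good b T Q S σ) := by
  suffices claim : ∀ k : ℕ, ∀ τ ∈ T, σ <+: τ → (T.filter (fun ν => τ <+: ν)).card ≤ k →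
      (∃ S, Good a T P S τ) ∨ (∃ S, Good b T Q S τ) by
    exact claim T.card σ htr.1 List.prefix_rfl (Finset.card_le_card (Finset.filter_subset _ _))
  intro k
  induction k with
  | zero =>
    intro τ hτ _ hc
    exfalso
    have h1 : τ ∈ T.filter (fun ν => τ <+: ν) := Finset.mem_filter.mpr ⟨hτ, List.prefix_rfl⟩
    have := Finset.card_pos.mpr ⟨τ, h1⟩
    omega
  | succ k ih =>
    intro τ hτ hστ hc
    by_cases hleaf : IsLeaf T τ
    · rcases hcov τ hτ with h | h
      · exact Or.inl ⟨_, good_single hT hP hτ h hleaf⟩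
      · exact Or.inr ⟨_, good_single hT hQ hτ h hleaf⟩
    · have hsucc : ∀ ρ ∈ succs T τ, (∃ S, Good a T P S ρ) ∨ (∃ S, Good b T Q S ρ) := by
        intro ρ hρ
        obtain ⟨hρT, hτρ, hlen⟩ := mem_succs.mp hρ
        apply ih ρ hρT (hστ.trans hτρ)
        have hsub : T.filter (fun ν => ρ <+: ν) ⊆ (T.filter (fun ν => τ <+: ν)).erase τ := by
          intro ν hν
          obtain ⟨hνT, hρν⟩ := Finset.mem_filter.mp hν
          refine Finset.mem_erase.mpr ⟨?_, Finset.mem_filter.mpr ⟨hνT, hτρ.trans hρν⟩⟩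
          intro h
          subst h
          have := hρν.length_le
          omega
        have h1 : τ ∈ T.filter (fun ν => τ <+: ν) := Finset.mem_filter.mpr ⟨hτ, List.prefix_rfl⟩
        have h2 := Finset.card_le_card hsub
        rw [Finset.card_erase_of_mem h1] at h2
        have := Finset.card_pos.mpr ⟨τ, h1⟩
        omega
      have hcF : a + b - 1 ≤ (succs T τ).card := hbr τ hτ hστ hleaf
      set FA := (succs T τ).filter (fun ρ => ∃ S, Good a T P S ρ) with hFA
      set FB := (succs T τ).filter (fun ρ => ∃ S, Good b T Q S ρ) with hFB
      have hcover : succs T τ ⊆ FA ∪ FB := by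
        intro ρ hρ
        rcases hsucc ρ hρ with h | h
        · exact Finset.mem_union_left _ (Finset.mem_filter.mpr ⟨hρ, h⟩)
        · exact Finset.mem_union_right _ (Finset.mem_filter.mpr ⟨hρ, h⟩)
      have hcc : (succs T τ).card ≤ FA.card + FB.card :=
        le_trans (Finset.card_le_card hcover) (Finset.card_union_le _ _)
      have hor : a ≤ FA.card ∨ b ≤ FB.card := by omega
      rcases hor with h | h
      · left
        classical
        have hSf : ∀ ρ ∈ FA,
            Good a T P ((fun ρ => if hx : ∃ S, Good a T P S ρ then hx.choose else ∅) ρ) ρ := by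
          intro ρ hρ
          have hx := (Finset.mem_filter.mp hρ).2
          simp only [dif_pos hx]
          exact hx.choose_spec
        exact ⟨_, good_combine ha hT hP hτ (Finset.filter_subset _ _) h hSf⟩
      · right
        classical
        have hSf : ∀ ρ ∈ FB,
            Good b T Q ((fun ρ => if hx : ∃ S, Good b T Q S ρ then hx.choose else ∅) ρ) ρ := by
          intro ρ hρ
          have hx := (Finset.mem_filter.mp hρ).2
          simp only [dif_pos hx]
          exact hx.choose_spec
        exact ⟨_, good_combine hb hT hQ hτ (Finset.filter_subset _ _) h hSf⟩

lemma main_aux (m : ℕ) (hm : 1 ≤ m) :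
    ∀ n : ℕ, 1 ≤ n → ∀ T : Finset (List ℕ), ∀ σ : List ℕ, ∀ P : Fin n → Finset (List ℕ),
      IsTree T → (∀ i, IsTree (P i)) → HasTrunk T σ → Branching (m * 2 ^ (n - 1)) T σ →
      (∀ τ ∈ T, ∃ i, τ ∈ P i) → ∃ i : Fin n, ∃ S, Good m T (P i) S σ := by
  intro n
  induction n with
  | zero => omega
  | succ k ih =>
    intro _ T σ P hT hP htr hbr hsub
    by_cases hk : k = 0
    · subst hk
      refine ⟨0, T, hT, Finset.Subset.refl T, htr, ?_, fun ν h => h, ?_⟩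
      · simpa using hbr
      · intro τ hτ
        obtain ⟨i, hi⟩ := hsub τ hτ
        rwa [Subsingleton.elim (0 : Fin 1) i]
    · -- k ≥ 1
      have hk1 : 1 ≤ k := by omega
      set U : Finset (List ℕ) :=
        (Finset.univ : Finset (Fin k)).biUnion (fun i => P i.castSucc) with hU
      have hUtree : IsTree U := by
        intro ν hν μ hμ
        obtain ⟨i, _, hi⟩ := Finset.mem_biUnion.mp hν
        exact Finset.mem_biUnion.mpr ⟨i, Finset.mem_univ i, hP i.castSucc ν hi μ hμ⟩
      have hcov : ∀ τ ∈ T, τ ∈ U ∨ τ ∈ P (Fin.last k) := by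
        intro τ hτ
        obtain ⟨i, hi⟩ := hsub τ hτ
        by_cases hil : i = Fin.last k
        · right; rwa [← hil]
        · left
          refine Finset.mem_biUnion.mpr ⟨i.castPred hil, Finset.mem_univ _, ?_⟩
          rwa [Fin.castSucc_castPred]
      have ha : 1 ≤ m * 2 ^ (k - 1) := Nat.one_le_iff_ne_zero.mpr (by positivity)
      have hbr' : Branching (m * 2 ^ (k - 1) + m - 1) T σ := by
        intro τ hτ hστ hnl
        refine le_trans ?_ (hbr τ hτ hστ hnl)
        have h2 : 2 ^ k = 2 ^ (k - 1) * 2 := by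
          rw [← pow_succ]
          congr 1
          omega
        have hx : 1 ≤ 2 ^ (k - 1) := Nat.one_le_two_pow
        have hmx : m * 1 ≤ m * 2 ^ (k - 1) := Nat.mul_le_mul_left m hx
        rw [mul_one] at hmx
        have h3 : m * (2 ^ (k - 1) * 2) = m * 2 ^ (k - 1) + m * 2 ^ (k - 1) := by ring
        simp only [Nat.add_sub_cancel, h2, h3]
        omega
      rcases two_split ha hm hT hUtree (hP (Fin.last k)) htr hbr' hcov with ⟨S', hG⟩ | ⟨S, hG⟩
      · obtain ⟨hS'tree, hS'T, hS'tr, hS'br, hS'leaf, hS'U⟩ := hG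
        obtain ⟨i, S, hst, hss, hstr, hsbr, hsl, hsp⟩ :=
          ih hk1 S' σ (fun i => P i.castSucc) hS'tree (fun i => hP _) hS'tr hS'br
            (fun τ hτ => by
              obtain ⟨j, _, hj⟩ := Finset.mem_biUnion.mp (hS'U hτ)
              exact ⟨j, hj⟩)
        exact ⟨i.castSucc, S, hst, fun ν hν => hS'T (hss hν), hstr, hsbr,
          fun ν hν => hS'leaf ν (hsl ν hν), hsp⟩
      · exact ⟨Fin.last k, S, hG⟩
  
theorem stmt_1 (m n : ℕ) (hm : 1 ≤ m) (hn : 1 ≤ n)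
    (T : Finset (List ℕ)) (σ : List ℕ) (P : Fin n → Finset (List ℕ))
    (hT : IsTree T) (hP : ∀ i : Fin n, IsTree (P i))
    (htr : HasTrunk T σ) (hbr : Branching (m * 2 ^ (n - 1)) T σ)
    (hsub : ∀ τ ∈ T, ∃ i : Fin n, τ ∈ P i) :
    ∃ i : Fin n, ∃ S : Finset (List ℕ), IsTree S ∧ S ⊆ T ∧ HasTrunk S σ ∧
      Branching m S σ ∧ (∀ τ : List ℕ, IsLeaf S τ → IsLeaf T τ) ∧ S ⊆ P i := by
  obtain ⟨i, S, h1, h2, h3, h4, h5, h6⟩ := main_aux m hm n hn T σ P hT hP htr hbr hsub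
  exact ⟨i, S, h1, h2, h3, h4, h5, h6⟩
end

section
/- For every k ≥ 1, in the on-line graph coloring game restricted to the class of forests and played for 2^k rounds with k colors, the adversary ∀ has a winning strategy: there is a strategy for ∀ enumerating a forest with at most 2^k vertices such that no on-line assignment of colors from {0,…,k-1} by ∃ yields a proper coloring. -/
/-- The moves of the adversary ∀ determined by its strategy `A` (a function from the
history of colors played by ∃ to the next set of earlier vertices to connect to)
against the on-line coloring `c` chosen by ∃:  at round `t`, ∀ plays vertex `t` and
connects it to the vertices in `Mv A c t`. -/
def Mv {k : ℕ} (A : List (Fin k) → Finset ℕ) (c : ℕ → Fin k) (t : ℕ) : Finset ℕ :=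
  A ((List.range t).map c)

/-- The graph (on vertex set ℕ) enumerated by the adversary, where vertex `t` is
joined to the vertices in `P t`. -/
def playGraph (P : ℕ → Finset ℕ) : SimpleGraph ℕ where
  Adj a b := a ≠ b ∧ (a ∈ P b ∨ b ∈ P a)
  symm := by
    constructor
    intro a b h
    exact ⟨h.1.symm, h.2.symm⟩
  loopless := by
    constructor
    intro a h
    exact h.1 rfl

namespace Stmt5

def N (r : ℕ) : ℕ := 2 ^ (r + 1) - 1

lemma Npos (r : ℕ) : 1 ≤ N r := by
  have : 2 ≤ 2 ^ (r+1) := Nat.one_lt_two_pow_iff.mpr (by omega)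
  simp [N]; omega

lemma Nsucc (r : ℕ) : N (r + 1) = 2 * N r + 1 := by
  have : 1 ≤ 2 ^ (r+1) := Nat.one_le_two_pow
  simp [N, pow_succ]; omega

variable {k : ℕ}

def strat (c : ℕ → Fin k) : ℕ → ℕ → Finset ℕ × (ℕ → Finset ℕ)
  | 0, base => ({base}, fun _ => ∅)
  | r + 1, base =>
    (if h : ((strat c r (base + N r)).1.filter
          (fun v => c v ∉ (strat c r base).1.image c)).Nonempty then
        insert (((strat c r (base + N r)).1.filter
          (fun v => c v ∉ (strat c r base).1.image c)).min' h) (strat c r base).1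
      else insert (base + 2 * N r) (strat c r (base + N r)).1,
     fun t =>
      if t < base + N r then (strat c r base).2 t
      else if t < base + 2 * N r then (strat c r (base + N r)).2 t
      else if t = base + 2 * N r then
        (if ((strat c r (base + N r)).1.filter
            (fun v => c v ∉ (strat c r base).1.image c)).Nonempty then ∅
         else (strat c r base).1)
      else ∅)

lemma des_subset (c : ℕ → Fin k) : ∀ r base, (strat c r base).1 ⊆ Finset.Ico base (base + N r) := by
  intro r
  induction r with
  | zero =>
    intro base x hx
    simp [strat] at hx
    simp [hx, N]
  | succ r ih =>
    intro base x hx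
    have h1 := Npos r
    simp only [strat] at hx
    rw [Nsucc]
    split at hx
    · rename_i hne
      rcases Finset.mem_insert.mp hx with h | h
      · have hm : _ ∈ (strat c r (base + N r)).1 :=
          Finset.mem_of_mem_filter _ (Finset.min'_mem _ hne)
        have := ih (base + N r) hm
        subst h
        simp only [Finset.mem_Ico] at this ⊢
        omega
      · have := ih base h
        simp only [Finset.mem_Ico] at this ⊢
        omega
    · rcases Finset.mem_insert.mp hx with h | h
      · subst h; simp only [Finset.mem_Ico]; omega
      · have := ih (base + N r) h
        simp only [Finset.mem_Ico] at this ⊢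
        omega

lemma mv_mem (c : ℕ → Fin k) : ∀ r base t j, j ∈ (strat c r base).2 t →
    base ≤ j ∧ j < t ∧ t < base + N r := by
  intro r
  induction r with
  | zero => intro base t j hj; simp [strat] at hj
  | succ r ih =>
    intro base t j hj
    have h1 := Npos r
    simp only [strat] at hj
    rw [Nsucc]
    split at hj
    · have := ih base t j hj; omega
    · split at hj
      · have := ih (base + N r) t j hj; omega
      · split at hj
        · split at hj
          · simp at hj
          · have := des_subset c r base hj
            simp only [Finset.mem_Ico] at this
            omega
        · simp at hj


def move (c : ℕ → Fin k) (t : ℕ) : Finset ℕ :=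
  if t < 2 ^ k - 1 then (strat c (k - 1) 0).2 t
  else if t = 2 ^ k - 1 then (strat c (k - 1) 0).1
  else ∅

lemma Ntop (hk : 1 ≤ k) : N (k - 1) = 2 ^ k - 1 := by
  unfold N
  rw [show k - 1 + 1 = k by omega]

inductive Valid (k : ℕ) : ℕ → ℕ → Prop
  | top : Valid k (k - 1) 0
  | left : ∀ {r base}, Valid k (r + 1) base → Valid k r base
  | right : ∀ {r base}, Valid k (r + 1) base → Valid k r (base + N r)

lemma deleg (hk : 1 ≤ k) (c : ℕ → Fin k) :
    ∀ {r base}, Valid k r base → ∀ t, base ≤ t → t < base + N r →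
      move c t = (strat c r base).2 t := by
  intro r base h
  induction h with
  | top =>
    intro t ht1 ht2
    rw [Ntop hk] at ht2
    simp only [move]
    rw [if_pos (by omega)]
  | left hv ih =>
    rename_i r base
    intro t ht1 ht2
    have h1 := Npos r
    rw [ih t ht1 (by rw [Nsucc]; omega)]
    simp only [strat]
    rw [if_pos (by omega)]
  | right hv ih =>
    rename_i r base
    intro t ht1 ht2
    have h1 := Npos r
    rw [ih t (by omega) (by rw [Nsucc]; omega)]
    simp only [strat]
    rw [if_neg (by omega), if_pos (by omega)]

lemma move_mem (hk : 1 ≤ k) (c : ℕ → Fin k) {t j : ℕ} (h : j ∈ move c t) : j < t := by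
  simp only [move] at h
  split at h
  · exact (mv_mem c _ _ _ _ h).2.1
  · split at h
    · have := des_subset c (k - 1) 0 h
      rw [Ntop hk] at this
      simp only [Finset.mem_Ico] at this
      omega
    · simp at h

lemma move_empty (c : ℕ → Fin k) {t : ℕ} (h : 2 ^ k ≤ t) : move c t = ∅ := by
  have : 1 ≤ 2 ^ k := Nat.one_le_two_pow
  simp only [move]
  rw [if_neg (by omega), if_neg (by omega)]

/-- The graph `playGraph P` restricted to vertices `< m`. -/
def Gb (P : ℕ → Finset ℕ) (m : ℕ) : SimpleGraph ℕ where
  Adj a b := a < m ∧ b < m ∧ (playGraph P).Adj a b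
  symm := ⟨fun a b h => ⟨h.2.1, h.1, h.2.2.symm⟩⟩
  loopless := ⟨fun a h => h.2.2.1 rfl⟩

lemma gb_symm (P : ℕ → Finset ℕ) (m : ℕ) : Symmetric (Gb P m).Adj :=
  fun _ _ h => h.symm

/-- Confinement lemma: a walk that starts in the interval `[lo, hi)` and uses only
vertices `< m` stays in `[lo, hi)`, provided vertices in `[lo, hi)` connect only
backwards into `[lo, ·)` and vertices in `[hi, m)` do not connect into `[lo, hi)`. -/
lemma conf (P : ℕ → Finset ℕ) (hP : ∀ t j, j ∈ P t → j < t)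
    (lo hi m : ℕ) (hm : hi ≤ m)
    (H1 : ∀ a, lo ≤ a → a < hi → ∀ j ∈ P a, lo ≤ j)
    (H2 : ∀ b, hi ≤ b → b < m → ∀ j ∈ P b, j < lo ∨ hi ≤ j)
    {u v : ℕ} (hu1 : lo ≤ u) (hu2 : u < hi)
    (h : Relation.ReflTransGen (Gb P m).Adj u v) :
    (lo ≤ v ∧ v < hi) ∧ Relation.ReflTransGen (Gb P hi).Adj u v := by
  induction h with
  | refl => exact ⟨⟨hu1, hu2⟩, Relation.ReflTransGen.refl⟩
  | tail hub hbv ih =>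
    rename_i b v
    obtain ⟨⟨hb1, hb2⟩, hrtg⟩ := ih
    obtain ⟨hbm, hvm, hne, hor⟩ : b < m ∧ v < m ∧ b ≠ v ∧ (b ∈ P v ∨ v ∈ P b) := hbv
    have hv : lo ≤ v ∧ v < hi := by
      rcases hor with h1 | h1
      · -- b ∈ P v, so b < v
        have hblt : b < v := hP _ _ h1
        constructor
        · omega
        · by_contra hcon
          push_neg at hcon
          rcases H2 v hcon hvm b h1 with h2 | h2 <;> omega
      · -- v ∈ P b
        have hvlt : v < b := hP _ _ h1
        exact ⟨H1 b hb1 hb2 v h1, by omega⟩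
    exact ⟨hv, hrtg.tail (⟨hb2, hv.2, hne, hor⟩ : b < hi ∧ v < hi ∧ b ≠ v ∧ (b ∈ P v ∨ v ∈ P b))⟩


lemma H1gen (hk : 1 ≤ k) (c : ℕ → Fin k) {r base : ℕ} (hv : Valid k r base) :
    ∀ a, base ≤ a → a < base + N r → ∀ j ∈ move c a, base ≤ j := by
  intro a ha1 ha2 j hj
  rw [deleg hk c hv a ha1 ha2] at hj
  exact (mv_mem c _ _ _ _ hj).1

lemma movex (hk : 1 ≤ k) (c : ℕ → Fin k) {r base : ℕ} (hv : Valid k (r + 1) base) :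
    move c (base + 2 * N r) =
      if ((strat c r (base + N r)).1.filter
          (fun v => c v ∉ (strat c r base).1.image c)).Nonempty then ∅
      else (strat c r base).1 := by
  have hn := Npos r
  rw [deleg hk c hv (base + 2 * N r) (by omega) (by rw [Nsucc]; omega)]
  simp only [strat]
  rw [if_neg (by omega), if_neg (by omega)]
  simp

lemma desinv (hk : 1 ≤ k) (c : ℕ → Fin k) :
    ∀ r base, Valid k r base → ∀ u v, u ∈ (strat c r base).1 → v ∈ (strat c r base).1 →
      u ≠ v → ¬ Relation.ReflTransGen (Gb (move c) (base + N r)).Adj u v := by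
  intro r
  induction r with
  | zero =>
    intro base hv u v hu hvv hne
    simp [strat] at hu hvv
    exact absurd (hu.trans hvv.symm) hne
  | succ r ih =>
    intro base hv u v hu hvv hne hr
    have hn := Npos r
    have hv1 : Valid k r base := Valid.left hv
    have hv2 : Valid k r (base + N r) := Valid.right hv
    have hPg : ∀ t j, j ∈ move c t → j < t := fun t j h => move_mem hk c h
    rw [show base + N (r + 1) = base + 2 * N r + 1 from by rw [Nsucc]; omega] at hr
    have H1a := H1gen hk c hv1
    have H1b := H1gen hk c hv2
    have hD1 := des_subset c r base
    have hD2 := des_subset c r (base + N r)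
    simp only [strat] at hu hvv
    by_cases hS : ((strat c r (base + N r)).1.filter
        (fun v => c v ∉ (strat c r base).1.image c)).Nonempty
    · rw [dif_pos hS] at hu hvv
      -- the new designated vertex is in block 2
      have hwD2 : ((strat c r (base + N r)).1.filter
          (fun v => c v ∉ (strat c r base).1.image c)).min' hS ∈ (strat c r (base + N r)).1 :=
        Finset.mem_of_mem_filter _ (Finset.min'_mem _ hS)
      have hwlo := Finset.mem_Ico.mp (hD2 hwD2)
      have H2a : ∀ b, base + N r ≤ b → b < base + 2 * N r + 1 → ∀ j ∈ move c b,
          j < base ∨ base + N r ≤ j := by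
        intro b hb1 hb2 j hj
        by_cases hb3 : b < base + 2 * N r
        · right
          exact H1b b hb1 (by omega) j hj
        · have hbe : b = base + 2 * N r := by omega
          rw [hbe, movex hk c hv, if_pos hS] at hj
          simp at hj
      rcases Finset.mem_insert.mp hu with hu' | hu' <;>
        rcases Finset.mem_insert.mp hvv with hv' | hv'
      · exact hne (hu'.trans hv'.symm)
      · -- u is the new vertex (in block 2), v ∈ D1 (block 1)
        have hr' : Relation.ReflTransGen (Gb (move c) (base + 2 * N r + 1)).Adj v u :=
          by haveI := (Gb (move c) (base + 2 * N r + 1)).symm; exact Std.Symm.symm _ _ hr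
        have hvb := Finset.mem_Ico.mp (hD1 hv')
        obtain ⟨⟨_, h2⟩, _⟩ := conf (move c) hPg base (base + N r) (base + 2 * N r + 1)
          (by omega) H1a H2a hvb.1 hvb.2 hr'
        omega
      · have hub := Finset.mem_Ico.mp (hD1 hu')
        obtain ⟨⟨_, h2⟩, _⟩ := conf (move c) hPg base (base + N r) (base + 2 * N r + 1)
          (by omega) H1a H2a hub.1 hub.2 hr
        omega
      · have hub := Finset.mem_Ico.mp (hD1 hu')
        obtain ⟨_, hrtg⟩ := conf (move c) hPg base (base + N r) (base + 2 * N r + 1)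
          (by omega) H1a H2a hub.1 hub.2 hr
        exact ih base hv1 u v hu' hv' hne hrtg
    · rw [dif_neg hS] at hu hvv
      have H2b : ∀ b, base + 2 * N r ≤ b → b < base + 2 * N r + 1 → ∀ j ∈ move c b,
          j < base + N r ∨ base + 2 * N r ≤ j := by
        intro b hb1 hb2 j hj
        have hbe : b = base + 2 * N r := by omega
        rw [hbe, movex hk c hv, if_neg hS] at hj
        have := Finset.mem_Ico.mp (hD1 hj)
        omega
      have H1b' : ∀ a, base + N r ≤ a → a < base + 2 * N r → ∀ j ∈ move c a,
          base + N r ≤ j := by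
        intro a ha1 ha2 j hj
        exact H1b a ha1 (by omega) j hj
      rcases Finset.mem_insert.mp hu with hu' | hu' <;>
        rcases Finset.mem_insert.mp hvv with hv' | hv'
      · exact hne (hu'.trans hv'.symm)
      · have hr' : Relation.ReflTransGen (Gb (move c) (base + 2 * N r + 1)).Adj v u :=
          by haveI := (Gb (move c) (base + 2 * N r + 1)).symm; exact Std.Symm.symm _ _ hr
        have hvb := Finset.mem_Ico.mp (hD2 hv')
        obtain ⟨⟨_, h2⟩, _⟩ := conf (move c) hPg (base + N r) (base + 2 * N r)
          (base + 2 * N r + 1) (by omega) H1b' H2b (by omega) (by omega) hr'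
        omega
      · have hub := Finset.mem_Ico.mp (hD2 hu')
        obtain ⟨⟨_, h2⟩, _⟩ := conf (move c) hPg (base + N r) (base + 2 * N r)
          (base + 2 * N r + 1) (by omega) H1b' H2b (by omega) (by omega) hr
        omega
      · have hub := Finset.mem_Ico.mp (hD2 hu')
        obtain ⟨_, hrtg⟩ := conf (move c) hPg (base + N r) (base + 2 * N r)
          (base + 2 * N r + 1) (by omega) H1b' H2b (by omega) (by omega) hr
        rw [show base + 2 * N r = base + N r + N r from by omega] at hrtg
        exact ih (base + N r) hv2 u v hu' hv' hne hrtg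

lemma mvinv (hk : 1 ≤ k) (c : ℕ → Fin k) :
    ∀ r base, Valid k r base → ∀ t u v, u ∈ (strat c r base).2 t →
      v ∈ (strat c r base).2 t → u ≠ v →
      ¬ Relation.ReflTransGen (Gb (move c) t).Adj u v := by
  intro r
  induction r with
  | zero => intro base hv t u v hu; simp [strat] at hu
  | succ r ih =>
    intro base hv t u v hu hvv hne hr
    have hn := Npos r
    have hv1 : Valid k r base := Valid.left hv
    have hv2 : Valid k r (base + N r) := Valid.right hv
    have hPg : ∀ t j, j ∈ move c t → j < t := fun t j h => move_mem hk c h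
    simp only [strat] at hu hvv
    split_ifs at hu hvv with h1 h2 h3 h4
    · exact ih base hv1 t u v hu hvv hne hr
    · exact ih (base + N r) hv2 t u v hu hvv hne hr
    · simp at hu
    · -- t = base + 2 * N r, colors of the two halves agree: moves attach to D1
      subst h3
      have H1a := H1gen hk c hv1
      have H1b := H1gen hk c hv2
      have H2 : ∀ b, base + N r ≤ b → b < base + 2 * N r → ∀ j ∈ move c b,
          j < base ∨ base + N r ≤ j := by
        intro b hb1 hb2 j hj
        right
        exact H1b b hb1 (by omega) j hj
      have hub := Finset.mem_Ico.mp (des_subset c r base hu)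
      obtain ⟨_, hrtg⟩ := conf (move c) hPg base (base + N r) (base + 2 * N r)
        (by omega) H1a H2 hub.1 hub.2 hr
      exact desinv hk c r base hv1 u v hu hvv hne hrtg
    · simp at hu

lemma moveinv (hk : 1 ≤ k) (c : ℕ → Fin k) :
    ∀ t u v, u ∈ move c t → v ∈ move c t → u ≠ v →
      ¬ Relation.ReflTransGen (Gb (move c) t).Adj u v := by
  intro t u v hu hvv hne hr
  simp only [move] at hu hvv
  split_ifs at hu hvv with h1 h2
  · exact mvinv hk c (k - 1) 0 Valid.top t u v hu hvv hne hr
  · have := desinv hk c (k - 1) 0 Valid.top u v hu hvv hne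
    rw [Ntop hk, Nat.zero_add, ← h2] at this
    exact this hr
  · simp at hu


open SimpleGraph in
lemma rtg_of_walk_below (P : ℕ → Finset ℕ) (t : ℕ) :
    ∀ {a b : ℕ} (p : (playGraph P).Walk a b), (∀ x ∈ p.support, x < t) →
      Relation.ReflTransGen (Gb P t).Adj a b := by
  intro a b p
  induction p with
  | nil => intro _; exact Relation.ReflTransGen.refl
  | cons h p ih =>
    intro hbd
    refine Relation.ReflTransGen.head (⟨hbd _ (Walk.start_mem_support _), hbd _ ?_, h⟩ : _ < t ∧ _ < t ∧ (playGraph P).Adj _ _) (ih ?_)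
    · rw [Walk.support_cons]
      exact List.mem_cons_of_mem _ p.start_mem_support
    · intro x hx
      exact hbd x (by rw [Walk.support_cons]; exact List.mem_cons_of_mem _ hx)

open SimpleGraph in
lemma acyclic_of (P : ℕ → Finset ℕ) (hP : ∀ t j, j ∈ P t → j < t)
    (hinv : ∀ t u v, u ∈ P t → v ∈ P t → u ≠ v →
      ¬ Relation.ReflTransGen (Gb P t).Adj u v) :
    (playGraph P).IsAcyclic := by
  intro v p hp
  have hvmem : v ∈ p.support := p.start_mem_support
  have hsne : p.support.toFinset.Nonempty := ⟨v, List.mem_toFinset.mpr hvmem⟩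
  set t := p.support.toFinset.max' hsne with htd
  have htmem : t ∈ p.support := List.mem_toFinset.mp (p.support.toFinset.max'_mem hsne)
  have hmax : ∀ x ∈ p.support, x ≤ t := fun x hx =>
    p.support.toFinset.le_max' x (List.mem_toFinset.mpr hx)
  have key : ∀ (q : (playGraph P).Walk t t), q.IsCycle → (∀ x ∈ q.support, x ≤ t) → False := by
    intro q hq hqm
    cases q with
    | nil => exact hq.ne_nil rfl
    | cons hadj q' =>
      rename_i b
      obtain ⟨hq'path, hedge⟩ := (Walk.cons_isCycle_iff q' hadj).mp hq
      have hq2path : q'.reverse.IsPath := hq'path.reverse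
      have hsub' : ∀ x ∈ q'.support, x ≤ t := fun x hx =>
        hqm x (by rw [Walk.support_cons]; exact List.mem_cons_of_mem _ hx)
      cases hq2e : q'.reverse with
      | nil => exact hadj.1 rfl
      | cons hadj2 q3 =>
        rename_i w
        rw [hq2e] at hq2path
        obtain ⟨hq3path, htns⟩ := (Walk.cons_isPath_iff _ _).mp hq2path
        have hbw : b ≠ w := by
          intro hbweq
          subst hbweq
          apply hedge
          have hmem : s(t, b) ∈ q'.reverse.edges := by
            rw [hq2e]
            simp [Walk.edges_cons]
          rwa [Walk.edges_reverse, List.mem_reverse] at hmem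
        have hq3sub : ∀ x ∈ q3.support, x ∈ q'.support := by
          intro x hx
          have hmem : x ∈ q'.reverse.support := by
            rw [hq2e, Walk.support_cons]
            exact List.mem_cons_of_mem _ hx
          rwa [Walk.support_reverse, List.mem_reverse] at hmem
        have hwq' : w ∈ q'.support := hq3sub w q3.start_mem_support
        have hbq' : b ∈ q'.support := q'.start_mem_support
        have hbP : b ∈ P t := by
          rcases hadj.2 with h1 | h1
          · have h2 := hP b t h1
            have h3 := hsub' b hbq'
            omega
          · exact h1
        have hwP : w ∈ P t := by
          rcases hadj2.2 with h1 | h1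
          · have h2 := hP w t h1
            have h3 := hsub' w hwq'
            omega
          · exact h1
        have hq3bd : ∀ x ∈ q3.support, x < t := by
          intro x hx
          have h1 := hsub' x (hq3sub x hx)
          have h2 : x ≠ t := fun he => htns (he ▸ hx)
          omega
        exact hinv t w b hwP hbP (Ne.symm hbw) (rtg_of_walk_below P t q3 hq3bd)
  apply key (p.rotate t htmem) (hp.rotate htmem)
  intro x hx
  rw [Walk.support_eq_cons] at hx
  rcases List.mem_cons.mp hx with h | h
  · exact h ▸ le_refl t
  · have h2 : x ∈ p.support.tail :=
      (List.IsRotated.mem_iff (Walk.support_rotate p t htmem)).mp h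
    exact hmax x (by rw [Walk.support_eq_cons p]; exact List.mem_cons_of_mem _ h2)


lemma colorinv (hk : 1 ≤ k) (c : ℕ → Fin k) :
    ∀ r base, Valid k r base →
      (∃ t, t < base + N r ∧ ∃ j ∈ move c t, c j = c t) ∨
      ((strat c r base).1.card = r + 1 ∧ ((strat c r base).1.image c).card = r + 1) := by
  intro r
  induction r with
  | zero =>
    intro base hv
    right
    simp [strat]
  | succ r ih =>
    intro base hv
    have hn := Npos r
    have hv1 : Valid k r base := Valid.left hv
    have hv2 : Valid k r (base + N r) := Valid.right hv
    rcases ih base hv1 with ⟨t, ht, hwin⟩ | ⟨hc1, hi1⟩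
    · exact Or.inl ⟨t, by rw [Nsucc]; omega, hwin⟩
    rcases ih (base + N r) hv2 with ⟨t, ht, hwin⟩ | ⟨hc2, hi2⟩
    · exact Or.inl ⟨t, by rw [Nsucc]; omega, hwin⟩
    by_cases hS : ((strat c r (base + N r)).1.filter
        (fun v => c v ∉ (strat c r base).1.image c)).Nonempty
    · -- color sets differ: enlarge for free
      right
      have hwmem := Finset.min'_mem _ hS
      rw [Finset.mem_filter] at hwmem
      obtain ⟨hwD2, hwcol⟩ := hwmem
      have hwnot : ((strat c r (base + N r)).1.filter
          (fun v => c v ∉ (strat c r base).1.image c)).min' hS ∉ (strat c r base).1 :=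
        fun hmem => hwcol (Finset.mem_image_of_mem c hmem)
      constructor
      · simp only [strat, dif_pos hS]
        rw [Finset.card_insert_of_notMem hwnot, hc1]
      · simp only [strat, dif_pos hS]
        rw [Finset.image_insert, Finset.card_insert_of_notMem hwcol, hi1]
    · -- color sets are equal
      have hsub : (strat c r (base + N r)).1.image c ⊆ (strat c r base).1.image c := by
        intro a ha
        obtain ⟨v, hv', hveq⟩ := Finset.mem_image.mp ha
        by_contra hcon
        have : v ∈ (strat c r (base + N r)).1.filter
            (fun v => c v ∉ (strat c r base).1.image c) :=
          Finset.mem_filter.mpr ⟨hv', by rw [hveq]; exact hcon⟩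
        exact hS ⟨v, this⟩
      have heq : (strat c r (base + N r)).1.image c = (strat c r base).1.image c :=
        Finset.eq_of_subset_of_card_le hsub (by rw [hi1, hi2])
      have hmvx := movex hk c hv
      rw [if_neg hS] at hmvx
      by_cases hx : c (base + 2 * N r) ∈ (strat c r base).1.image c
      · -- the merge vertex repeats a colour: ∃ loses now
        left
        obtain ⟨j, hj, hjeq⟩ := Finset.mem_image.mp hx
        exact ⟨base + 2 * N r, by rw [Nsucc]; omega, j, by rw [hmvx]; exact hj, hjeq⟩
      · right
        have hxnot : base + 2 * N r ∉ (strat c r (base + N r)).1 := by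
          intro hmem
          have := Finset.mem_Ico.mp (des_subset c r (base + N r) hmem)
          omega
        have hxcol : c (base + 2 * N r) ∉ (strat c r (base + N r)).1.image c := by
          rw [heq]; exact hx
        constructor
        · simp only [strat, dif_neg hS]
          rw [Finset.card_insert_of_notMem hxnot, hc2]
        · simp only [strat, dif_neg hS]
          rw [Finset.image_insert, Finset.card_insert_of_notMem hxcol, hi2]

lemma stratcong (c c' : ℕ → Fin k) : ∀ r base,
    ((∀ i, i < base + N r → c i = c' i) → (strat c r base).1 = (strat c' r base).1) ∧
    (∀ t, (∀ i, i < t → c i = c' i) → (strat c r base).2 t = (strat c' r base).2 t) := by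
  intro r
  induction r with
  | zero => intro base; exact ⟨fun _ => rfl, fun _ _ => rfl⟩
  | succ r ih =>
    intro base
    have hn := Npos r
    have hfilter : ∀ (m : ℕ), base + 2 * N r ≤ m → (∀ i, i < m → c i = c' i) →
        (strat c r (base + N r)).1.filter (fun v => c v ∉ (strat c r base).1.image c) =
        (strat c' r (base + N r)).1.filter (fun v => c' v ∉ (strat c' r base).1.image c') := by
      intro m hm hagree
      have hD1 : (strat c r base).1 = (strat c' r base).1 :=
        (ih base).1 (fun i hi => hagree i (by omega))
      have hD2 : (strat c r (base + N r)).1 = (strat c' r (base + N r)).1 :=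
        (ih (base + N r)).1 (fun i hi => hagree i (by omega))
      have himg : (strat c r base).1.image c = (strat c' r base).1.image c' := by
        rw [← hD1]
        apply Finset.image_congr
        intro v hv
        have := Finset.mem_Ico.mp (des_subset c r base hv)
        exact hagree v (by omega)
      rw [← hD2]
      apply Finset.filter_congr
      intro v hv
      have := Finset.mem_Ico.mp (des_subset c r (base + N r) hv)
      rw [hagree v (by omega), himg]
    constructor
    · intro hagree
      have hf := hfilter (base + N (r + 1)) (by rw [Nsucc]; omega) hagree
      have hD1 : (strat c r base).1 = (strat c' r base).1 :=
        (ih base).1 (fun i hi => hagree i (by rw [Nsucc]; omega))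
      have hD2 : (strat c r (base + N r)).1 = (strat c' r (base + N r)).1 :=
        (ih (base + N r)).1 (fun i hi => hagree i (by rw [Nsucc]; omega))
      simp only [strat]
      rw [hf, hD1, hD2]
    · intro t hagree
      by_cases h1 : t < base + N r
      · simp only [strat]
        rw [if_pos h1, if_pos h1]
        exact (ih base).2 t hagree
      by_cases h2 : t < base + 2 * N r
      · simp only [strat]
        rw [if_neg h1, if_neg h1, if_pos h2, if_pos h2]
        exact (ih (base + N r)).2 t hagree
      by_cases h3 : t = base + 2 * N r
      · have hf := hfilter t (by omega) hagree
        have hD1 : (strat c r base).1 = (strat c' r base).1 :=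
          (ih base).1 (fun i hi => hagree i (by omega))
        simp only [strat]
        rw [if_neg h1, if_neg h1, if_neg h2, if_neg h2, if_pos h3, if_pos h3, hf, hD1]
      · simp only [strat]
        rw [if_neg h1, if_neg h1, if_neg h2, if_neg h2, if_neg h3, if_neg h3]

lemma movecong (hk : 1 ≤ k) (c c' : ℕ → Fin k) (t : ℕ) (h : ∀ i, i < t → c i = c' i) :
    move c t = move c' t := by
  simp only [move]
  split_ifs with h1 h2
  · exact (stratcong c c' (k - 1) 0).2 t h
  · apply (stratcong c c' (k - 1) 0).1
    intro i hi
    rw [Nat.zero_add, Ntop hk, ← h2] at hi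
    exact h i hi
  · rfl

end Stmt5

/-- In the on-line coloring game on forests with `k` colors and `2^k` rounds, the
adversary ∀ has a winning strategy: there is a strategy `A` such that, against any
on-line assignment `c` of colors by ∃, the moves are legal (each new vertex is joined
only to previously played vertices, only `2^k` vertices are played, and the enumerated
graph is a forest), and the resulting coloring is improper. -/
theorem stmt_5 (k : ℕ) (hk : 1 ≤ k) :
    ∃ A : List (Fin k) → Finset ℕ, ∀ c : ℕ → Fin k,
      (∀ t : ℕ, ∀ j ∈ Mv A c t, j < t) ∧
      (∀ t : ℕ, 2 ^ k ≤ t → Mv A c t = ∅) ∧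
      (playGraph (Mv A c)).IsAcyclic ∧
      (∃ t < 2 ^ k, ∃ j ∈ Mv A c t, c j = c t) := by
  refine ⟨fun h => Stmt5.move (fun i => h.getD i ⟨0, hk⟩) h.length, fun c => ?_⟩
  have hMv : Mv (fun h => Stmt5.move (fun i => h.getD i ⟨0, hk⟩) h.length) c = Stmt5.move c := by
    funext t
    show Stmt5.move (fun i => ((List.range t).map c).getD i ⟨0, hk⟩)
      ((List.range t).map c).length = Stmt5.move c t
    rw [show ((List.range t).map c).length = t by simp]
    apply Stmt5.movecong hk
    intro i hi
    have hlen : i < ((List.range t).map c).length := by simp [hi]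
    rw [List.getD_eq_getElem _ _ hlen]
    simp
  rw [hMv]
  have h2k : 1 ≤ 2 ^ k := Nat.one_le_two_pow
  refine ⟨fun t j hj => Stmt5.move_mem hk c hj,
    fun t ht => Stmt5.move_empty c ht,
    Stmt5.acyclic_of _ (fun t j hj => Stmt5.move_mem hk c hj) (Stmt5.moveinv hk c), ?_⟩
  rcases Stmt5.colorinv hk c (k - 1) 0 Stmt5.Valid.top with ⟨t, ht, j, hj, hcj⟩ | ⟨hcard, himg⟩
  · rw [Nat.zero_add, Stmt5.Ntop hk] at ht
    exact ⟨t, by omega, j, hj, hcj⟩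
  · rw [show k - 1 + 1 = k from by omega] at himg
    have huniv : ((Stmt5.strat c (k - 1) 0).1.image c) = Finset.univ :=
      Finset.eq_univ_of_card _ (by rw [himg, Fintype.card_fin])
    have hmem : c (2 ^ k - 1) ∈ (Stmt5.strat c (k - 1) 0).1.image c :=
      huniv ▸ Finset.mem_univ _
    obtain ⟨j, hj, hje⟩ := Finset.mem_image.mp hmem
    have hmv : Stmt5.move c (2 ^ k - 1) = (Stmt5.strat c (k - 1) 0).1 := by
      simp only [Stmt5.move]
      rw [if_neg (lt_irrefl _)]
      simp
    exact ⟨2 ^ k - 1, by omega, j, by rw [hmv]; exact hj, hje⟩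
end

section
/- Let f, g, h : ℕ → ℕ with h computable from f, let b ∈ ℕ, and suppose e is an index with Φ_e^f(x) = Φ_x^h(x) for all x. Define d(e,a,b) as the index of the program that, with oracle f ⊕ g on input ℓ, searches for a pair ⟨i,s⟩ with i < a, Φ_{i,s}^{f⊕g}(ℓ) < b, and no ℓ₀ < ℓ with Φ_{i,ℓ}^{f⊕g}(ℓ₀) = Φ_{ℓ₀,ℓ}^h(ℓ₀), and outputs Φ_{i,s}^{f⊕g}(ℓ) for the first such pair found. If there exists i < a such that Φ_i^{f⊕g} is a total b-bounded diagonally non-recursive function relative to h, then Φ_{d(e,a,b)}^{f⊕g} is total and eventually DNR(b,h): there is n such that for all ℓ > n, Φ_{d(e,a,b)}^{f⊕g}(ℓ) ≠ Φ_ℓ^h(ℓ). -/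
namespace Paper

/-- Codes for oracle partial recursive functions (Kleene-style, with an `oracle` query). -/
inductive OCode : Type
  | zero : OCode
  | succ : OCode
  | left : OCode
  | right : OCode
  | oracle : OCode
  | pair : OCode → OCode → OCode
  | comp : OCode → OCode → OCode
  | prec : OCode → OCode → OCode
  | rfind' : OCode → OCode

/-- Evaluation of an oracle code relative to a (partial) oracle `o`. -/
def oeval (o : ℕ →. ℕ) : OCode → ℕ →. ℕ
  | .zero => pure 0
  | .succ => Nat.succ
  | .left => ↑fun n : ℕ => n.unpair.1
  | .right => ↑fun n : ℕ => n.unpair.2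
  | .oracle => o
  | .pair cf cg => fun n => Nat.pair <$> oeval o cf n <*> oeval o cg n
  | .comp cf cg => fun n => oeval o cg n >>= oeval o cf
  | .prec cf cg =>
    Nat.unpaired fun a n =>
      n.rec (oeval o cf a) fun y IH => do
        let i ← IH
        oeval o cg (Nat.pair a (Nat.pair y i))
  | .rfind' cf =>
    Nat.unpaired fun a m =>
      (Nat.rfind fun n => (fun m => m = 0) <$> oeval o cf (Nat.pair a (n + m))).map (· + m)

/-- Decoding of natural numbers into oracle codes (with fuel). -/
def ofNatAux : ℕ → ℕ → OCode
  | 0, _ => .zero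
  | _ + 1, 0 => .zero
  | _ + 1, 1 => .succ
  | _ + 1, 2 => .left
  | _ + 1, 3 => .right
  | _ + 1, 4 => .oracle
  | fuel + 1, n + 5 =>
    let m := n.div2.div2
    match n.bodd, n.div2.bodd with
    | false, false => .pair (ofNatAux fuel m.unpair.1) (ofNatAux fuel m.unpair.2)
    | false, true => .comp (ofNatAux fuel m.unpair.1) (ofNatAux fuel m.unpair.2)
    | true, false => .prec (ofNatAux fuel m.unpair.1) (ofNatAux fuel m.unpair.2)
    | true, true => .rfind' (ofNatAux fuel m)

/-- The `e`-th oracle code. -/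
def ofNatOC (e : ℕ) : OCode := ofNatAux (e + 1) e

/-- `Phi o e` is Φ_e^o, the `e`-th partial function computed with oracle `o`. -/
def Phi (o : ℕ →. ℕ) (e : ℕ) : ℕ →. ℕ := oeval o (ofNatOC e)

/-- A total function regarded as a (partial) oracle. -/
def tot (f : ℕ → ℕ) : ℕ →. ℕ := fun n => Part.some (f n)

/-- The join `f ⊕ g` of two partial oracles. -/
def pjoin (f g : ℕ →. ℕ) : ℕ →. ℕ := fun n => if n % 2 = 0 then f (n / 2) else g (n / 2)

end Paper

namespace Paper

/-- Step-bounded evaluation of an oracle code relative to a total oracle `o : ℕ → Option ℕ`. -/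
def oevaln (o : ℕ → Option ℕ) : ℕ → OCode → ℕ → Option ℕ
  | 0, _ => fun _ => Option.none
  | k + 1, OCode.zero => fun n => do
    guard (n ≤ k)
    return 0
  | k + 1, OCode.succ => fun n => do
    guard (n ≤ k)
    return (Nat.succ n)
  | k + 1, OCode.left => fun n => do
    guard (n ≤ k)
    return n.unpair.1
  | k + 1, OCode.right => fun n => do
    guard (n ≤ k)
    return n.unpair.2
  | k + 1, OCode.oracle => fun n => do
    guard (n ≤ k)
    o n
  | k + 1, OCode.pair cf cg => fun n => do
    guard (n ≤ k)
    Nat.pair <$> oevaln o (k + 1) cf n <*> oevaln o (k + 1) cg n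
  | k + 1, OCode.comp cf cg => fun n => do
    guard (n ≤ k)
    let x ← oevaln o (k + 1) cg n
    oevaln o (k + 1) cf x
  | k + 1, OCode.prec cf cg => fun n => do
    guard (n ≤ k)
    n.unpaired fun a n =>
      n.casesOn (oevaln o (k + 1) cf a) fun y => do
        let i ← oevaln o k (OCode.prec cf cg) (Nat.pair a y)
        oevaln o (k + 1) cg (Nat.pair a (Nat.pair y i))
  | k + 1, OCode.rfind' cf => fun n => do
    guard (n ≤ k)
    n.unpaired fun a m => do
      let x ← oevaln o (k + 1) cf (Nat.pair a m)
      if x = 0 then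
        pure m
      else
        oevaln o k (OCode.rfind' cf) (Nat.pair a (m + 1))

/-- `Φ_{e,s}^o(x)`: the step-bounded computation with total oracle `o`. -/
def PhiS (o : ℕ → ℕ) (s e x : ℕ) : Option ℕ :=
  oevaln (fun n => Option.some (o n)) s (ofNatOC e) x

/-- The join of two total functions. -/
def jn (f g : ℕ → ℕ) : ℕ → ℕ :=
  fun n => if n % 2 = 0 then f (n / 2) else g (n / 2)

/-- `q = ⟨i, s⟩` is a successful pair for the search performed by the program
`d(e,a,b)` on input `L` (with `F = f ⊕ g`): `i < a`, `Φ_{i,s}^F(L)` converges with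
value `< b`, and there is no `ℓ₀ < L` with `Φ_{i,L}^F(ℓ₀) = Φ_{ℓ₀,L}^h(ℓ₀)`. -/
def GoodPair (F h : ℕ → ℕ) (a b L q : ℕ) : Prop :=
  q.unpair.1 < a ∧
  (∃ v : ℕ, v < b ∧ PhiS F q.unpair.2 q.unpair.1 L = Option.some v) ∧
  ¬ ∃ l₀ : ℕ, l₀ < L ∧ ∃ w : ℕ,
      PhiS F L q.unpair.1 l₀ = Option.some w ∧ PhiS h L l₀ l₀ = Option.some w

open Nat

theorem oevaln_bound {o : ℕ → Option ℕ} :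
    ∀ {k c n x}, x ∈ oevaln o k c n → n < k
  | 0, c, _, _, h => by simp [oevaln] at h
  | k + 1, c, n, x, h => by
    suffices ∀ {o' : Option ℕ}, x ∈ do { guard (n ≤ k); o' } → n < k + 1 by
      cases c <;> rw [oevaln] at h <;> exact this h
    simpa [Option.bind_eq_some_iff] using Nat.lt_succ_of_le

theorem oevaln_mono {o : ℕ → Option ℕ} :
    ∀ {k₁ k₂ c n x}, k₁ ≤ k₂ → x ∈ oevaln o k₁ c n → x ∈ oevaln o k₂ c n
  | 0, k₂, c, n, x, _, h => by simp [oevaln] at h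
  | k + 1, k₂ + 1, c, n, x, hl, h => by
    have hl' := Nat.le_of_succ_le_succ hl
    have :
      ∀ {k k₂ n x : ℕ} {o₁ o₂ : Option ℕ},
        k ≤ k₂ → (x ∈ o₁ → x ∈ o₂) →
          x ∈ do { guard (n ≤ k); o₁ } → x ∈ do { guard (n ≤ k₂); o₂ } := by
      simp only [Option.mem_def, bind, Option.bind_eq_some_iff, Option.guard_eq_some', exists_and_left,
        exists_const, and_imp]
      introv h h₁ h₂ h₃
      exact ⟨le_trans h₂ h, h₁ h₃⟩
    simp only [Option.mem_def] at h ⊢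
    induction' c with cf cg hf hg cf cg hf hg cf cg hf hg cf hf generalizing x n <;>
      rw [oevaln] at h ⊢ <;> refine this hl' (fun h => ?_) h
    iterate 5 exact h
    · -- pair cf cg
      simp only [Seq.seq, Option.map_eq_map, Option.mem_def, Option.bind_eq_some_iff,
        Option.map_eq_some_iff, exists_exists_and_eq_and] at h ⊢
      exact h.imp fun a => And.imp (hf _ _) <| Exists.imp fun b => And.imp_left (hg _ _)
    · -- comp cf cg
      simp only [bind, Option.mem_def, Option.bind_eq_some_iff] at h ⊢
      exact h.imp fun a => And.imp (hg _ _) (hf _ _)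
    · -- prec cf cg
      revert h
      simp only [unpaired, bind, Option.mem_def]
      induction n.unpair.2 <;> simp [Option.bind_eq_some_iff]
      · apply hf
      · exact fun y h₁ h₂ => ⟨y, oevaln_mono hl' h₁, hg _ _ h₂⟩
    · -- rfind' cf
      simp only [unpaired, bind, pair_unpair, Option.pure_def, Option.mem_def,
        Option.bind_eq_some_iff] at h ⊢
      refine h.imp fun x => And.imp (hf _ _) ?_
      by_cases x0 : x = 0 <;> simp [x0]
      exact oevaln_mono hl'

theorem oevaln_sound {o : ℕ → ℕ} :
    ∀ {k c n x}, x ∈ oevaln (fun n => Option.some (o n)) k c n → x ∈ oeval (tot o) c n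
  | 0, _, n, x, h => by simp [oevaln] at h
  | k + 1, c, n, x, h => by
    induction' c with cf cg hf hg cf cg hf hg cf cg hf hg cf hf generalizing x n <;>
        simp [oeval, oevaln, tot, Option.bind_eq_some_iff, Seq.seq] at h ⊢ <;>
      cases' h with _ h
    iterate 5 simpa [pure, PFun.pure, eq_comm] using h
    · -- pair cf cg
      rcases h with ⟨y, ef, z, eg, rfl⟩
      exact ⟨_, hf _ _ ef, _, hg _ _ eg, rfl⟩
    · --comp hf hg
      rcases h with ⟨y, eg, ef⟩
      exact Part.mem_bind (hg _ _ eg) (hf _ _ ef)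
    · -- prec cf cg
      revert h
      induction' n.unpair.2 with m IH generalizing x <;> simp [Option.bind_eq_some_iff]
      · apply hf
      · refine fun y h₁ h₂ => ⟨y, IH _ ?_, ?_⟩
        · have := oevaln_mono k.le_succ h₁
          simp [oevaln, Option.bind_eq_some_iff] at this
          exact this.2
        · exact hg _ _ h₂
    · -- rfind' cf
      rcases h with ⟨m, h₁, h₂⟩
      by_cases m0 : m = 0 <;> simp [m0] at h₂
      · exact
          ⟨0, Nat.mem_rfind.2 ⟨by simpa [m0] using hf _ _ h₁, fun {m} => (Nat.not_lt_zero _).elim⟩, by simp [h₂]⟩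
      · have := oevaln_sound h₂
        simp [oeval] at this
        rcases this with ⟨y, hy, rfl⟩
        rcases Nat.mem_rfind.1 hy with ⟨hy₁, hy₂⟩
        simp at hy₁ hy₂
        refine
          ⟨y + 1, Nat.mem_rfind.2 ⟨by simpa [add_comm, add_left_comm] using hy₁, fun {i} im => ?_⟩, by
            simp [add_comm, add_left_comm]⟩
        simp
        cases' i with i
        · exact ⟨m, by simpa using hf _ _ h₁, m0⟩
        · rcases hy₂ (Nat.lt_of_succ_lt_succ im) with ⟨z, hz, z0⟩
          exact ⟨z, by simpa [add_comm, add_left_comm] using hz, z0⟩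

theorem oevaln_complete {o : ℕ → ℕ} {c n x} :
    x ∈ oeval (tot o) c n ↔ ∃ k, x ∈ oevaln (fun n => Option.some (o n)) k c n := by
  refine ⟨fun h => ?_, fun ⟨k, h⟩ => oevaln_sound h⟩
  rsuffices ⟨k, h⟩ : ∃ k, x ∈ oevaln (fun n => Option.some (o n)) (k + 1) c n
  · exact ⟨k + 1, h⟩
  induction c generalizing n x with
      simp [oeval, oevaln, tot, pure, PFun.pure, Seq.seq, Option.bind_eq_some_iff] at h ⊢
  | pair cf cg hf hg =>
    rcases h with ⟨x, hx, y, hy, rfl⟩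
    rcases hf hx with ⟨k₁, hk₁⟩; rcases hg hy with ⟨k₂, hk₂⟩
    refine ⟨max k₁ k₂, ?_⟩
    refine
      ⟨le_max_of_le_left <| Nat.le_of_lt_succ <| oevaln_bound hk₁, _,
        oevaln_mono (Nat.succ_le_succ <| le_max_left _ _) hk₁, _,
        oevaln_mono (Nat.succ_le_succ <| le_max_right _ _) hk₂, rfl⟩
  | comp cf cg hf hg =>
    rcases Part.mem_bind_iff.1 h with ⟨y, hy, hx⟩
    rcases hg hy with ⟨k₁, hk₁⟩; rcases hf hx with ⟨k₂, hk₂⟩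
    refine ⟨max k₁ k₂, ?_⟩
    exact
      ⟨le_max_of_le_left <| Nat.le_of_lt_succ <| oevaln_bound hk₁, _,
        oevaln_mono (Nat.succ_le_succ <| le_max_left _ _) hk₁,
        oevaln_mono (Nat.succ_le_succ <| le_max_right _ _) hk₂⟩
  | prec cf cg hf hg =>
    revert h
    generalize n.unpair.1 = n₁; generalize n.unpair.2 = n₂
    induction' n₂ with m IH generalizing x n <;> simp [Option.bind_eq_some_iff]
    · intro h
      rcases hf h with ⟨k, hk⟩
      exact ⟨_, le_max_left _ _, oevaln_mono (Nat.succ_le_succ <| le_max_right _ _) hk⟩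
    · intro y hy hx
      rcases IH hy with ⟨k₁, nk₁, hk₁⟩
      rcases hg hx with ⟨k₂, hk₂⟩
      refine
        ⟨(max k₁ k₂).succ,
          Nat.le_succ_of_le <| le_max_of_le_left <|
            le_trans (le_max_left _ (Nat.pair n₁ m)) nk₁, y,
          oevaln_mono (Nat.succ_le_succ <| le_max_left _ _) ?_,
          oevaln_mono (Nat.succ_le_succ <| Nat.le_succ_of_le <| le_max_right _ _) hk₂⟩
      simp only [oevaln, bind, unpaired, unpair_pair, Option.mem_def, Option.bind_eq_some_iff,
        Option.guard_eq_some', exists_and_left, exists_const]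
      exact ⟨le_trans (le_max_right _ _) nk₁, hk₁⟩
  | rfind' cf hf =>
    rcases h with ⟨y, hy, rfl⟩
    rcases Nat.mem_rfind.1 hy with ⟨hy₁, hy₂⟩
    clear hy
    simp at hy₁ hy₂
    suffices ∃ k, y + n.unpair.2 ∈ oevaln (fun n => Option.some (o n)) (k + 1) (OCode.rfind' cf)
        (Nat.pair n.unpair.1 n.unpair.2) by
      simpa [oevaln, Option.bind_eq_some_iff]
    revert hy₁ hy₂
    generalize n.unpair.2 = m
    intro hy₁ hy₂
    induction' y with y IH generalizing m <;> simp [oevaln, Option.bind_eq_some_iff]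
    · simp at hy₁
      rcases hf hy₁ with ⟨k, hk⟩
      exact ⟨_, Nat.le_of_lt_succ <| oevaln_bound hk, _, hk, by simp⟩
    · rcases hy₂ (Nat.succ_pos _) with ⟨a, ha, a0⟩
      rcases hf ha with ⟨k₁, hk₁⟩
      rcases IH m.succ (by simpa [Nat.succ_eq_add_one, add_comm, add_left_comm] using hy₁)
          fun {i} hi => by
          simpa [Nat.succ_eq_add_one, add_comm, add_left_comm] using
            hy₂ (Nat.succ_lt_succ hi) with
        ⟨k₂, hk₂⟩
      use (max k₁ k₂).succ
      rw [zero_add] at hk₁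
      use Nat.le_succ_of_le <| le_max_of_le_left <| Nat.le_of_lt_succ <| oevaln_bound hk₁
      use a
      use oevaln_mono (Nat.succ_le_succ <| Nat.le_succ_of_le <| le_max_left _ _) hk₁
      simpa [a0, add_comm, add_left_comm] using
        oevaln_mono (Nat.succ_le_succ <| le_max_right _ _) hk₂
  | oracle => exact ⟨⟨_, le_rfl⟩, h.symm⟩
  | _ => exact ⟨⟨_, le_rfl⟩, h.symm⟩


open scoped Classical in
/-- The behavior of the program `d(e,a,b)` with oracle `F = f ⊕ g` on input `L`:
it searches for the first successful pair `⟨i, s⟩` and outputs `Φ_{i,s}^F(L)`,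
diverging if there is no such pair. -/
noncomputable def dSpec (F h : ℕ → ℕ) (a b L : ℕ) : Part ℕ :=
  ⟨∃ q : ℕ, GoodPair F h a b L q, fun hq =>
    (PhiS F (Nat.find hq).unpair.2 (Nat.find hq).unpair.1 L).getD 0⟩

theorem PhiS_mono {o : ℕ → ℕ} {s s' e x v : ℕ} (hss : s ≤ s') (h : PhiS o s e x = some v) :
    PhiS o s' e x = some v := oevaln_mono hss h

theorem Phi_eq_some_iff {o : ℕ → ℕ} {e x v : ℕ} :
    Phi (tot o) e x = Part.some v ↔ ∃ s, PhiS o s e x = Option.some v := by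
  rw [Part.eq_some_iff]
  exact oevaln_complete

/-- If `h ≤_T f`, `e` is an index with `Φ_e^f(x) = Φ_x^h(x)` for all `x`, `D` is an
index whose behavior relative to `f ⊕ g` is as the program `d(e,a,b)`, and some
`i < a` computes (relative to `f ⊕ g`) a total `b`-bounded DNR(`h`) function, then
`Φ_D^{f ⊕ g}` is total and eventually DNR(`b`, `h`). -/
theorem stmt_7 (f g h : ℕ → ℕ) (a b e D : ℕ)
    (hhf : ∃ e' : ℕ, ∀ n : ℕ, Phi (tot f) e' n = Part.some (h n))
    (he : ∀ x : ℕ, Phi (tot f) e x = Phi (tot h) x x)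
    (hD : ∀ L : ℕ, Phi (tot (jn f g)) D L = dSpec (jn f g) h a b L)
    (hex : ∃ i : ℕ, i < a ∧ ∃ p : ℕ → ℕ,
      (∀ L : ℕ, Phi (tot (jn f g)) i L = Part.some (p L)) ∧
      (∀ L : ℕ, p L < b) ∧
      ∀ e' y : ℕ, Phi (tot h) e' e' = Part.some y → p e' ≠ y) :
    (∀ L : ℕ, (Phi (tot (jn f g)) D L).Dom) ∧
      ∃ n : ℕ, ∀ L : ℕ, n < L → ∀ y w : ℕ,
        Phi (tot (jn f g)) D L = Part.some y →
        Phi (tot h) L L = Part.some w → y ≠ w := by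
  classical
  obtain ⟨i, hia, p, hp, hpb, hdnr⟩ := hex
  set F := jn f g with hF
  -- totality of the search
  have htot : ∀ L : ℕ, ∃ q : ℕ, GoodPair F h a b L q := by
    intro L
    obtain ⟨s, hs⟩ := Phi_eq_some_iff.1 (hp L)
    refine ⟨Nat.pair i s, ?_, ?_, ?_⟩
    · simpa using hia
    · simp only [Nat.unpair_pair]
      exact ⟨p L, hpb L, hs⟩
    · simp only [Nat.unpair_pair]
      rintro ⟨l₀, hl₀, w, hw1, hw2⟩
      have h1 : Phi (tot F) i l₀ = Part.some w :=
        Phi_eq_some_iff.2 ⟨L, hw1⟩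
      have h2 : Phi (tot h) l₀ l₀ = Part.some w :=
        Phi_eq_some_iff.2 ⟨L, hw2⟩
      have hpl : p l₀ = w := by
        have := (hp l₀).symm.trans h1
        exact Part.some_inj.mp this
      exact hdnr l₀ w h2 hpl
  have hdom : ∀ L : ℕ, (Phi (tot F) D L).Dom := by
    intro L
    rw [hD L]
    exact htot L
  refine ⟨hdom, ?_⟩
  -- Bad indices
  set Bad : ℕ → Prop := fun i' => ∃ l₀ w : ℕ,
    Phi (tot F) i' l₀ = Part.some w ∧ Phi (tot h) l₀ l₀ = Part.some w with hBad
  have hM : ∀ i' : ℕ, ∃ m : ℕ, Bad i' → ∀ L : ℕ, m < L →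
      ∃ l₀ : ℕ, l₀ < L ∧ ∃ w : ℕ,
        PhiS F L i' l₀ = Option.some w ∧ PhiS h L l₀ l₀ = Option.some w := by
    intro i'
    by_cases hb : Bad i'
    · obtain ⟨l₀, w, h1, h2⟩ := hb
      obtain ⟨s₁, hs₁⟩ := Phi_eq_some_iff.1 h1
      obtain ⟨s₂, hs₂⟩ := Phi_eq_some_iff.1 h2
      refine ⟨max l₀ (max s₁ s₂), fun _ L hL => ⟨l₀, ?_, w, ?_, ?_⟩⟩
      · exact lt_of_le_of_lt (le_max_left _ _) hL
      · exact PhiS_mono (le_of_lt (lt_of_le_of_lt (le_trans (le_max_left _ _) (le_max_right _ _)) hL)) hs₁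
      · exact PhiS_mono (le_of_lt (lt_of_le_of_lt (le_trans (le_max_right _ _) (le_max_right _ _)) hL)) hs₂
    · exact ⟨0, fun hb' => absurd hb' hb⟩
  choose M hMspec using hM
  refine ⟨(Finset.range a).sup M, fun L hL y w hy hw hyw => ?_⟩
  subst hyw
  -- extract the found pair
  have hymem : y ∈ dSpec F h a b L := by
    rw [← hD L, hy]
    exact Part.mem_some y
  obtain ⟨hq, hget⟩ := hymem
  have hGP : GoodPair F h a b L (Nat.find hq) := Nat.find_spec hq
  obtain ⟨hi'a, ⟨v, hvb, hv⟩, hthird⟩ := hGP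
  have hyv : y = v := by
    have : (PhiS F (Nat.find hq).unpair.2 (Nat.find hq).unpair.1 L).getD 0 = y := hget
    rw [hv] at this
    simpa using this.symm
  subst hyv
  -- the chosen index is not bad
  have hnotbad : ¬ Bad (Nat.find hq).unpair.1 := by
    intro hb
    have hMle : M (Nat.find hq).unpair.1 ≤ (Finset.range a).sup M :=
      Finset.le_sup (Finset.mem_range.2 hi'a)
    obtain ⟨l₀, hl₀, w', hw1, hw2⟩ :=
      hMspec (Nat.find hq).unpair.1 hb L (lt_of_le_of_lt hMle hL)
    exact hthird ⟨l₀, hl₀, w', hw1, hw2⟩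
  exact hnotbad ⟨L, y, Phi_eq_some_iff.2 ⟨(Nat.find hq).unpair.2, hv⟩, hw⟩

end Paper
end

section
/- Let f : ℕ → ℕ, let k, m ∈ ℕ, let D be a finite set of pairs, and suppose σ ∈ k^{<ℕ} forces ≥m-branching f-divergence for every ⟨e,x⟩ ∈ D, where m·2^{|D|} ≤ k. Then every finite ≥(m·2^{|D|})-branching subtree of k^{<ℕ} with trunk σ has a leaf that forces ≥m-branching f-divergence for every ⟨e,x⟩ ∈ D. -/
namespace Paper

open scoped Classical

/-- A (finite) tree: a set of finite sequences closed under initial segments. -/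
def IsTree (T : Finset (List ℕ)) : Prop :=
  ∀ σ ∈ T, ∀ τ : List ℕ, τ <+: σ → τ ∈ T

/-- A leaf of `T`: an element with no proper extension in `T`. -/
def IsLeaf (T : Finset (List ℕ)) (σ : List ℕ) : Prop :=
  σ ∈ T ∧ ∀ τ ∈ T, σ <+: τ → τ = σ

/-- `σ` is a trunk of `T`: `σ ∈ T` and every element of `T` is comparable with `σ`. -/
def HasTrunk (T : Finset (List ℕ)) (σ : List ℕ) : Prop :=
  σ ∈ T ∧ ∀ τ ∈ T, σ <+: τ ∨ τ <+: σ

/-- The immediate successors of `τ` in `T`. -/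
noncomputable def succs (T : Finset (List ℕ)) (τ : List ℕ) : Finset (List ℕ) :=
  T.filter fun ρ => τ <+: ρ ∧ ρ.length = τ.length + 1

/-- `T` (with trunk `σ`) is ≥`n`-branching. -/
def Branching (n : ℕ) (T : Finset (List ℕ)) (σ : List ℕ) : Prop :=
  ∀ τ ∈ T, σ <+: τ → ¬ IsLeaf T τ → n ≤ (succs T τ).card

/-- All strings in `T` lie in `k^{<ℕ}`. -/
def InKTree (k : ℕ) (T : Finset (List ℕ)) : Prop :=
  ∀ τ ∈ T, ∀ a ∈ τ, a < k

/-- A finite string used as a partial oracle: defined exactly on `[0, |α|)`.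
(Per the usual convention, a computation relative to `f ⊕ α` diverges as soon as it
queries the oracle beyond the length of `α`.) -/
def stringOracle (α : List ℕ) : ℕ →. ℕ :=
  fun n => ⟨n < α.length, fun h => α.get ⟨n, h⟩⟩


/-- `σ` admits ≥`m`-branching `f`-convergence for `⟨e, x⟩`: there is a finite
≥`m`-branching subtree of `k^{<ℕ}` with trunk `σ` on each of whose leaves `α` the
computation `Φ_e^{f ⊕ α}(x)` converges. -/
def Admits (f : ℕ → ℕ) (k m e x : ℕ) (σ : List ℕ) : Prop :=
  ∃ T : Finset (List ℕ), IsTree T ∧ InKTree k T ∧ HasTrunk T σ ∧ Branching m T σ ∧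
    ∀ α : List ℕ, IsLeaf T α → (Phi (pjoin (tot f) (stringOracle α)) e x).Dom

/-- `σ` forces ≥`m`-branching `f`-divergence for `⟨e, x⟩`. -/
def Forces (f : ℕ → ℕ) (k m e x : ℕ) (σ : List ℕ) : Prop :=
  ¬ Admits f k m e x σ


/-- Simultaneous version of `Admits`: one tree whose leaves converge for all pairs in `S`. -/
def AdmitsSet (f : ℕ → ℕ) (k m : ℕ) (S : Finset (ℕ × ℕ)) (σ : List ℕ) : Prop :=
  ∃ T : Finset (List ℕ), IsTree T ∧ InKTree k T ∧ HasTrunk T σ ∧ Branching m T σ ∧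
    ∀ α : List ℕ, IsLeaf T α → ∀ q ∈ S, (Phi (pjoin (tot f) (stringOracle α)) q.1 q.2).Dom

noncomputable def prefs (τ : List ℕ) : Finset (List ℕ) :=
  (Finset.range (τ.length + 1)).image (fun i => τ.take i)

lemma mem_prefs {τ β : List ℕ} : β ∈ prefs τ ↔ β <+: τ := by
  simp only [prefs, Finset.mem_image, Finset.mem_range]
  constructor
  · rintro ⟨i, _, rfl⟩; exact List.take_prefix i τ
  · intro h
    exact ⟨β.length, by have := h.length_le; omega, (List.prefix_iff_eq_take.mp h).symm⟩

lemma length_lt_of_prefix_ne {τ ν : List ℕ} (h : τ <+: ν) (hne : ν ≠ τ) :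
    τ.length < ν.length := by
  rcases lt_or_eq_of_le h.length_le with h' | h'
  · exact h'
  · exact absurd (h.eq_of_length h').symm hne

lemma glue (f : ℕ → ℕ) (k m : ℕ) (S : Finset (ℕ × ℕ)) (τ : List ℕ)
    (hτk : ∀ a ∈ τ, a < k) (B : Finset (List ℕ)) (hBne : B.Nonempty) (hBm : m ≤ B.card)
    (hB : ∀ ρ ∈ B, τ <+: ρ ∧ ρ.length = τ.length + 1)
    (hA : ∀ ρ ∈ B, AdmitsSet f k m S ρ) : AdmitsSet f k m S τ := by
  have hch : ∀ ρ : List ℕ, ∃ U : Finset (List ℕ), ρ ∈ B →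
      IsTree U ∧ InKTree k U ∧ HasTrunk U ρ ∧ Branching m U ρ ∧
      ∀ α, IsLeaf U α → ∀ q ∈ S, (Phi (pjoin (tot f) (stringOracle α)) q.1 q.2).Dom := by
    intro ρ
    by_cases h : ρ ∈ B
    · obtain ⟨U, hU⟩ := hA ρ h; exact ⟨U, fun _ => hU⟩
    · exact ⟨∅, fun h' => absurd h' h⟩
  choose U hU using hch
  set W : Finset (List ℕ) := prefs τ ∪ B.biUnion U with hWdef
  have memW : ∀ β, β ∈ W ↔ β <+: τ ∨ ∃ ρ ∈ B, β ∈ U ρ := by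
    intro β
    simp only [hWdef, Finset.mem_union, Finset.mem_biUnion, mem_prefs]
  refine ⟨W, ?_, ?_, ?_, ?_, ?_⟩
  · -- IsTree
    intro β hβ γ hγ
    rcases (memW β).mp hβ with h | ⟨ρ, hρ, hβU⟩
    · exact (memW γ).mpr (Or.inl (hγ.trans h))
    · exact (memW γ).mpr (Or.inr ⟨ρ, hρ, (hU ρ hρ).1 β hβU γ hγ⟩)
  · -- InKTree
    intro β hβ a ha
    rcases (memW β).mp hβ with h | ⟨ρ, hρ, hβU⟩
    · exact hτk a (h.subset ha)
    · exact (hU ρ hρ).2.1 β hβU a ha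
  · -- HasTrunk
    refine ⟨(memW τ).mpr (Or.inl (List.prefix_refl _)), ?_⟩
    intro β hβ
    rcases (memW β).mp hβ with h | ⟨ρ, hρ, hβU⟩
    · exact Or.inr h
    · rcases (hU ρ hρ).2.2.1.2 β hβU with h | h
      · exact Or.inl ((hB ρ hρ).1.trans h)
      · rcases List.prefix_or_prefix_of_prefix h (hB ρ hρ).1 with h' | h'
        · exact Or.inr h'
        · exact Or.inl h'
  · -- Branching
    intro ν hν hτν hnleaf
    by_cases hvt : ν = τ
    · subst hvt
      have hsub : B ⊆ succs W ν := by
        intro ρ hρ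
        simp only [succs, Finset.mem_filter]
        exact ⟨(memW ρ).mpr (Or.inr ⟨ρ, hρ, (hU ρ hρ).2.2.1.1⟩), (hB ρ hρ).1, (hB ρ hρ).2⟩
      exact le_trans hBm (Finset.card_le_card hsub)
    · have hlen : ν.length > τ.length := length_lt_of_prefix_ne hτν hvt
      obtain ⟨ρ, hρ, hνU⟩ : ∃ ρ ∈ B, ν ∈ U ρ := by
        rcases (memW ν).mp hν with h | h
        · exact absurd (h.eq_of_length (le_antisymm h.length_le hτν.length_le)) hvt
        · exact h
      have hρν : ρ <+: ν := by
        rcases (hU ρ hρ).2.2.1.2 ν hνU with h | h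
        · exact h
        · have heq : ν = ρ := h.eq_of_length
            (le_antisymm h.length_le (by rw [(hB ρ hρ).2]; omega))
          rw [heq]
      have hext : ∀ β ∈ W, ν <+: β → β ∈ U ρ := by
        intro β hβ hνβ
        rcases (memW β).mp hβ with h | ⟨ρ', hρ', hβU⟩
        · exact absurd (hνβ.trans h).length_le (by omega)
        · by_cases he : ρ' = ρ
          · exact he ▸ hβU
          · exfalso
            have h1 : ρ <+: β := hρν.trans hνβ
            have h2 : ρ' <+: β := by
              rcases (hU ρ' hρ').2.2.1.2 β hβU with h' | h'
              · exact h'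
              · have : β = ρ' := h'.eq_of_length
                  (le_antisymm h'.length_le (by have := hνβ.length_le; rw [(hB ρ' hρ').2]; omega))
                rw [this]
            rcases List.prefix_or_prefix_of_prefix h1 h2 with h' | h'
            · exact he (h'.eq_of_length (by rw [(hB ρ hρ).2, (hB ρ' hρ').2])).symm
            · exact he (h'.eq_of_length (by rw [(hB ρ hρ).2, (hB ρ' hρ').2]))
      have hnleafρ : ¬ IsLeaf (U ρ) ν := by
        intro hl
        exact hnleaf ⟨hν, fun β hβ hνβ => hl.2 β (hext β hβ hνβ) hνβ⟩
      have hsub : succs (U ρ) ν ⊆ succs W ν := by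
        simp only [succs]
        exact Finset.filter_subset_filter _
          (fun β hβ => (memW β).mpr (Or.inr ⟨ρ, hρ, hβ⟩))
      exact le_trans ((hU ρ hρ).2.2.2.1 ν hνU hρν hnleafρ) (Finset.card_le_card hsub)
  · -- leaves
    intro α hα q hq
    rcases (memW α).mp hα.1 with h | ⟨ρ, hρ, hαU⟩
    · exfalso
      have hτW : τ ∈ W := (memW τ).mpr (Or.inl (List.prefix_refl _))
      have hατ : τ = α := hα.2 τ hτW h
      obtain ⟨ρ₀, hρ₀⟩ := hBne
      have hρ₀W : ρ₀ ∈ W := (memW ρ₀).mpr (Or.inr ⟨ρ₀, hρ₀, (hU ρ₀ hρ₀).2.2.1.1⟩)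
      have hρ₀α : ρ₀ = α := hα.2 ρ₀ hρ₀W (by rw [← hατ]; exact (hB ρ₀ hρ₀).1)
      have hl := (hB ρ₀ hρ₀).2
      rw [hρ₀α, ← hατ] at hl
      omega
    · exact (hU ρ hρ).2.2.2.2 α
        ⟨hαU, fun β hβ hαβ => hα.2 β ((memW β).mpr (Or.inr ⟨ρ, hρ, hβ⟩)) hαβ⟩ q hq


/-- If `σ` forces ≥`m`-branching `f`-divergence for every pair in `D` and
`m * 2^|D| ≤ k`, then every finite ≥`m·2^|D|`-branching subtree of `k^{<ℕ}` with trunk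
`σ` has a leaf forcing ≥`m`-branching `f`-divergence for every pair in `D`. -/
theorem stmt_8 (f : ℕ → ℕ) (k m : ℕ) (D : Finset (ℕ × ℕ)) (σ : List ℕ)
    (hσ : ∀ a ∈ σ, a < k) (hmk : m * 2 ^ D.card ≤ k)
    (hF : ∀ q ∈ D, Forces f k m q.1 q.2 σ)
    (T : Finset (List ℕ)) (hT : IsTree T) (hTk : InKTree k T)
    (htr : HasTrunk T σ) (hbr : Branching (m * 2 ^ D.card) T σ) :
    ∃ α : List ℕ, IsLeaf T α ∧ ∀ q ∈ D, Forces f k m q.1 q.2 α := by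
  by_contra hcon
  push_neg at hcon
  set L := T.sup List.length with hL
  have main : ∀ n, ∀ τ ∈ T, σ <+: τ → L + 1 - τ.length ≤ n →
      ∃ S : Finset (ℕ × ℕ), S ⊆ D ∧ S.Nonempty ∧ AdmitsSet f k m S τ := by
    intro n
    induction n with
    | zero =>
      intro τ hτ _ hn
      have : τ.length ≤ L := Finset.le_sup hτ
      omega
    | succ n ih =>
      intro τ hτ hστ hn
      by_cases hleaf : IsLeaf T τ
      · obtain ⟨q, hq, hqA⟩ := hcon τ hleaf
        rw [Forces, not_not] at hqA
        obtain ⟨U, h1, h2, h3, h4, h5⟩ := hqA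
        exact ⟨{q}, Finset.singleton_subset_iff.mpr hq, Finset.singleton_nonempty q,
          U, h1, h2, h3, h4, fun α hα q' hq' => by
            rw [Finset.mem_singleton] at hq'; subst hq'; exact h5 α hα⟩
      · have hsuccmem : ∀ ρ ∈ succs T τ, ρ ∈ T ∧ τ <+: ρ ∧ ρ.length = τ.length + 1 := by
          intro ρ hρ
          simpa only [succs, Finset.mem_filter, and_assoc] using hρ
        have hsne : (succs T τ).Nonempty := by
          have hβ : ∃ β ∈ T, τ <+: β ∧ β ≠ τ := by
            by_contra h
            push_neg at h
            exact hleaf ⟨hτ, fun β hb hpre => h β hb hpre⟩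
          obtain ⟨β, hβT, hβp, hβne⟩ := hβ
          have hlen : τ.length < β.length := length_lt_of_prefix_ne hβp hβne
          refine ⟨β.take (τ.length + 1), ?_⟩
          simp only [succs, Finset.mem_filter]
          refine ⟨hT β hβT _ (List.take_prefix _ _), ?_, ?_⟩
          · rw [List.prefix_take_iff]; exact ⟨hβp, by omega⟩
          · rw [List.length_take]; omega
        have hscard : m * 2 ^ D.card ≤ (succs T τ).card := hbr τ hτ hστ hleaf
        have hch : ∀ ρ : List ℕ, ∃ S : Finset (ℕ × ℕ), ρ ∈ succs T τ →
            S ⊆ D ∧ S.Nonempty ∧ AdmitsSet f k m S ρ := by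
          intro ρ
          by_cases h : ρ ∈ succs T τ
          · obtain ⟨h1, h2, h3⟩ := hsuccmem ρ h
            obtain ⟨S, hS⟩ := ih ρ h1 (hστ.trans h2) (by rw [h3]; omega)
            exact ⟨S, fun _ => hS⟩
          · exact ⟨∅, fun h' => absurd h' h⟩
        choose g hg using hch
        have hmaps : ∀ ρ ∈ succs T τ, g ρ ∈ D.powerset.erase ∅ := by
          intro ρ hρ
          obtain ⟨h1, h2, _⟩ := hg ρ hρ
          rw [Finset.mem_erase, Finset.mem_powerset]
          exact ⟨Finset.nonempty_iff_ne_empty.mp h2, h1⟩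
        have hcardt : (D.powerset.erase ∅).card = 2 ^ D.card - 1 := by
          rw [Finset.card_erase_of_mem (Finset.empty_mem_powerset D), Finset.card_powerset]
        have hp1 : 1 ≤ 2 ^ D.card := Nat.one_le_two_pow
        have hlt : (D.powerset.erase ∅).card * (max m 1 - 1) < (succs T τ).card := by
          rw [hcardt]
          rcases m with _ | m'
          · simpa using hsne.card_pos
          · obtain ⟨p', hp'⟩ : ∃ p', 2 ^ D.card = p' + 1 := ⟨2 ^ D.card - 1, by omega⟩
            have hscard' : (m' + 1) * (p' + 1) ≤ (succs T τ).card := by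
              rw [← hp']; exact hscard
            refine lt_of_lt_of_le ?_ hscard'
            rw [hp']
            have hmax : max (m' + 1) 1 = m' + 1 := by omega
            rw [hmax]
            simp only [Nat.add_sub_cancel]
            nlinarith
        obtain ⟨S, hSt, hfib⟩ :=
          Finset.exists_lt_card_fiber_of_mul_lt_card_of_maps_to hmaps hlt
        set B := (succs T τ).filter (fun ρ => g ρ = S) with hBdef
        have hBm : m ≤ B.card := by omega
        have hBne : B.Nonempty := Finset.card_pos.mp (by omega)
        have hBprops : ∀ ρ ∈ B, ρ ∈ succs T τ ∧ g ρ = S := fun ρ hρ => Finset.mem_filter.mp hρ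
        obtain ⟨ρ₀, hρ₀⟩ := id hBne
        obtain ⟨hρ₀s, hgρ₀⟩ := hBprops ρ₀ hρ₀
        obtain ⟨hg1, hg2, _⟩ := hg ρ₀ hρ₀s
        refine ⟨S, hgρ₀ ▸ hg1, hgρ₀ ▸ hg2, ?_⟩
        refine glue f k m S τ (hTk τ hτ) B hBne hBm ?_ ?_
        · intro ρ hρ; exact (hsuccmem ρ (hBprops ρ hρ).1).2
        · intro ρ hρ
          obtain ⟨hρs, hgρ⟩ := hBprops ρ hρ
          obtain ⟨_, _, h3⟩ := hg ρ hρs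
          exact hgρ ▸ h3
  obtain ⟨S, hSD, hSne, U, h1, h2, h3, h4, h5⟩ :=
    main (L + 1 - σ.length) σ htr.1 (List.prefix_refl σ) le_rfl
  obtain ⟨q, hq⟩ := hSne
  exact hF q (hSD hq) ⟨U, h1, h2, h3, h4, fun α hα => h5 α hα q hq⟩


end Paper
end

section
/- For every k ≥ 2: every countable locally k-colorable graph is k-colorable if and only if weak König's lemma holds (every infinite subtree of 2^{<ℕ} has an infinite path). (Forward direction as a computability statement: there is a computable locally 2-colorable graph with no computable 2-coloring whose 2-colorings compute paths through a given infinite computable binary tree; backward direction: WKL implies every locally k-colorable graph is k-colorable via compactness.) Prove the backward direction: assuming every infinite finitely-branching tree of partial colorings has a path, every countable graph all of whose finite induced subgraphs are k-colorable is k-colorable. -/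
theorem stmt_10 (k : ℕ) (hk : 2 ≤ k) (G : SimpleGraph ℕ)
    (hloc : ∀ s : Finset ℕ, ∃ χ : ℕ → Fin k,
      ∀ u ∈ s, ∀ v ∈ s, G.Adj u v → χ u ≠ χ v) :
    ∃ χ : ℕ → Fin k, ∀ u v : ℕ, G.Adj u v → χ u ≠ χ v := by
  have h := SimpleGraph.nonempty_hom_of_forall_finite_subgraph_hom
    (G := G) (F := (⊤ : SimpleGraph (Fin k))) (fun G' hfin =>
      let χ := (hloc hfin.toFinset).choose
      have hχ := (hloc hfin.toFinset).choose_spec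
      ⟨fun v => χ v, by
        rintro ⟨u, hu⟩ ⟨v, hv⟩ hadj
        exact hχ u (hfin.mem_toFinset.2 hu) v (hfin.mem_toFinset.2 hv) (G'.adj_sub hadj)⟩)
  obtain ⟨f⟩ := h
  exact ⟨f, fun u v hadj => f.map_adj hadj⟩
end
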